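/- arXiv:0807.2166 — 4 statements merged into one kernel-verified Lean document; each statement's English description precedes it below -/
import Mathlib

section
/- Let I ⊆ S = K[x_1,…,x_n] be a monomial ideal with c(I) = n and such that (x_1,…,x_{n−1}) ⊆ √I. Then sdepth(S/I) = 0. -/
open MvPolynomial

noncomputable section

/-- The Stanley space `u·K[Z]` where `u` is the monomial with exponent vector `d`:
the `K`-vector subspace of `K[x_1,…,x_n]` spanned by all monomials `u·w` with
`supp(w) ⊆ Z`. -/
def stanleySpace (K : Type*) [Field K] {n : ℕ} (d : Fin n →₀ ℕ) (Z : Finset (Fin n)) :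
    Submodule K (MvPolynomial (Fin n) K) :=
  Submodule.span K
    {p | ∃ e : Fin n →₀ ℕ, (e.support : Set (Fin n)) ⊆ (Z : Set (Fin n)) ∧
      p = monomial (d + e) (1 : K)}

/-- `(d, Z)` indexed by `Fin r` is a Stanley decomposition of the `K`-subspace `V` of
`K[x_1,…,x_n]`: the Stanley spaces `u_i K[Z_i]` are independent (so their sum is direct)
and their sum is `V`. -/
def IsStanleyDecomp {K : Type*} [Field K] {n : ℕ}
    (V : Submodule K (MvPolynomial (Fin n) K)) (r : ℕ)
    (d : Fin r → (Fin n →₀ ℕ)) (Z : Fin r → Finset (Fin n)) : Prop :=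
  iSupIndep (fun i => stanleySpace K (d i) (Z i)) ∧
    (⨆ i, stanleySpace K (d i) (Z i)) = V

/-- The Stanley depth of a `K`-subspace `V` of `K[x_1,…,x_n]`:
the largest `k` such that `V` has a Stanley decomposition all of whose Stanley spaces
have dimension (number of variables) at least `k`. -/
def sdepth {K : Type*} [Field K] {n : ℕ} (V : Submodule K (MvPolynomial (Fin n) K)) : ℕ :=
  sSup {k | ∃ r d Z, IsStanleyDecomp V r d Z ∧ ∀ i, k ≤ (Z i).card}

/-- `J^c`: the `K`-subspace of `K[x_1,…,x_n]` spanned by all monomials not contained in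
the ideal `J`. -/
def monomialCompl {K : Type*} [Field K] {n : ℕ} (J : Ideal (MvPolynomial (Fin n) K)) :
    Submodule K (MvPolynomial (Fin n) K) :=
  Submodule.span K
    {p | ∃ d : Fin n →₀ ℕ, monomial d (1 : K) ∉ J ∧ p = monomial d (1 : K)}

/-- `sdepth(S/I)`, realized as the Stanley depth of `I^c`. -/
def sdepthQuot {K : Type*} [Field K] {n : ℕ} (I : Ideal (MvPolynomial (Fin n) K)) : ℕ :=
  sdepth (monomialCompl I)

/-- `sdepth(I)` for an ideal `I`, viewed as a `K`-subspace. -/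
def sdepthIdeal {K : Type*} [Field K] {n : ℕ} (I : Ideal (MvPolynomial (Fin n) K)) : ℕ :=
  sdepth (Submodule.restrictScalars K I)

/-- A monomial ideal: an ideal generated by the monomials it contains. -/
def IsMonomialIdeal {K : Type*} [Field K] {n : ℕ} (I : Ideal (MvPolynomial (Fin n) K)) :
    Prop :=
  I = Ideal.span {p | ∃ d : Fin n →₀ ℕ, monomial d (1 : K) ∈ I ∧ p = monomial d (1 : K)}

/-- `G(I)`: the exponent vectors of the minimal monomial generators of `I`, i.e. the
monomials of `I` that are minimal with respect to divisibility. -/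
def minGens {K : Type*} [Field K] {n : ℕ} (I : Ideal (MvPolynomial (Fin n) K)) :
    Set (Fin n →₀ ℕ) :=
  {d | monomial d (1 : K) ∈ I ∧ ∀ e : Fin n →₀ ℕ, e ≤ d → monomial e (1 : K) ∈ I → e = d}

/-- `g(I) = |G(I)|`, the number of minimal monomial generators of `I`. -/
def numGens {K : Type*} [Field K] {n : ℕ} (I : Ideal (MvPolynomial (Fin n) K)) : ℕ :=
  (minGens I).ncard

/-- The exponent vector of `v = gcd(u : u ∈ G(I))`. -/
def gcdExp {K : Type*} [Field K] {n : ℕ} (I : Ideal (MvPolynomial (Fin n) K)) :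
    Fin n →₀ ℕ :=
  Finsupp.ofSupportFinite (fun i => sInf {k | ∃ d ∈ minGens I, d i = k}) (Set.toFinite _)

/-- `I' = (I : v)`, where `v = gcd(u : u ∈ G(I))`. -/
def colonGcd {K : Type*} [Field K] {n : ℕ} (I : Ideal (MvPolynomial (Fin n) K)) :
    Ideal (MvPolynomial (Fin n) K) :=
  Submodule.colon I (Ideal.span {monomial (gcdExp I) (1 : K)})

/-- `c(I) = |supp(I')|`, the number of variables dividing at least one minimal monomial
generator of `I' = (I : gcd(u : u ∈ G(I)))`. -/
def numSupp {K : Type*} [Field K] {n : ℕ} (I : Ideal (MvPolynomial (Fin n) K)) : ℕ :=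
  {i : Fin n | ∃ d ∈ minGens (colonGcd I), d i ≠ 0}.ncard

/-- The irrelevant maximal ideal `(x_1,…,x_n)` of a polynomial ring. -/
def irrelevantIdeal (K : Type*) [Field K] (σ : Type*) : Ideal (MvPolynomial σ K) :=
  Ideal.span (Set.range MvPolynomial.X)

/-- The saturation `I^sat = ∪_{k ≥ 1} (I : (x_1,…,x_n)^k)` of an ideal of a polynomial
ring with respect to the irrelevant maximal ideal. -/
def satIdeal {K : Type*} [Field K] {σ : Type*} (I : Ideal (MvPolynomial σ K)) :
    Ideal (MvPolynomial σ K) :=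
  ⨆ k : ℕ, Submodule.colon I ((irrelevantIdeal K σ ^ k : Ideal (MvPolynomial σ K)) : Set (MvPolynomial σ K))

end


lemma mem_span_monomials {K : Type*} [Field K] {n : ℕ} {A : Set (Fin n →₀ ℕ)} {c : Fin n →₀ ℕ}
    (h : monomial c (1:K) ∈ Submodule.span K
      {p : MvPolynomial (Fin n) K | ∃ d ∈ A, p = monomial d (1:K)}) :
    c ∈ A := by
  have key : ∀ p, p ∈ Submodule.span K
      {p : MvPolynomial (Fin n) K | ∃ d ∈ A, p = monomial d (1:K)} →
      coeff c p ≠ 0 → c ∈ A := by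
    intro p hp
    induction hp using Submodule.span_induction with
    | mem x hx =>
      intro hne
      obtain ⟨d, hd, rfl⟩ := hx
      rw [coeff_monomial] at hne
      split at hne
      · next heq => exact heq ▸ hd
      · exact absurd rfl hne
    | zero => simp
    | add x y _ _ ihx ihy =>
      intro hne
      rw [coeff_add] at hne
      by_cases h' : coeff c x = 0
      · refine ihy fun h0 => hne ?_
        rw [h', h0, add_zero]
      · exact ihx h'
    | smul a x _ ih =>
      intro hne
      rw [smul_eq_C_mul, coeff_C_mul] at hne
      exact ih fun h0 => hne (by rw [h0, mul_zero])
  exact key _ h (by simp)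

/-- For a monomial ideal `I ⊆ K[x_1,…,x_n]` with `c(I) = n` and
`(x_1,…,x_{n-1}) ⊆ √I`, one has `sdepth(S/I) = 0`. -/
theorem stmt11 {K : Type*} [Field K] {n : ℕ} (I : Ideal (MvPolynomial (Fin n) K))
    (hI : IsMonomialIdeal I) (hc : numSupp I = n)
    (hrad : Ideal.span {p : MvPolynomial (Fin n) K | ∃ i : Fin n, (i : ℕ) < n - 1 ∧ p = X i} ≤
      I.radical) :
    sdepthQuot I = 0 := by
  by_cases h1 : (monomial (0 : Fin n →₀ ℕ) (1 : K)) ∈ I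
  · -- Then `I = ⊤`, which forces `n = 0` and the set of candidate depths is all of ℕ.
    have hIT : I = ⊤ := by
      rw [Ideal.eq_top_iff_one]
      rwa [monomial_zero', C_1] at h1
    have hcolon : colonGcd I = ⊤ := by
      rw [eq_top_iff]
      intro x _
      rw [colonGcd, Submodule.mem_colon]
      intro p _
      rw [hIT]
      trivial
    have hmg : ∀ d ∈ minGens (colonGcd I), d = 0 := by
      intro d hd
      exact (hd.2 0 zero_le (by rw [hcolon]; trivial)).symm
    have hn : n = 0 := by
      rw [← hc, numSupp]
      convert Set.ncard_empty (Fin n) using 2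
      ext i
      simp only [Set.mem_setOf_eq, Set.mem_empty_iff_false, iff_false, not_exists]
      intro d hd
      exact hd.2 (by simp [hmg d hd.1])
    subst hn
    -- the monomial complement is trivial, so the empty decomposition works for every `k`
    have hV : monomialCompl I = ⊥ := by
      rw [monomialCompl]
      convert Submodule.span_empty (R := K) (M := MvPolynomial (Fin 0) K) using 2
      ext p
      simp only [Set.mem_setOf_eq, Set.mem_empty_iff_false, iff_false, not_exists]
      intro d hd
      exact absurd (by rw [Subsingleton.elim d 0]; exact h1) hd.1
    have hall : ∀ k : ℕ, k ∈ {k | ∃ r d Z, IsStanleyDecomp (monomialCompl I) r d Z ∧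
        ∀ i, k ≤ (Z i).card} := by
      intro k
      refine ⟨0, Fin.elim0, Fin.elim0, ⟨fun i => i.elim0, ?_⟩, fun i => i.elim0⟩
      rw [hV]
      exact iSup_of_empty _
    have hub : ¬ BddAbove {k | ∃ r d Z, IsStanleyDecomp (monomialCompl I) r d Z ∧
        ∀ i, k ≤ (Z i).card} := by
      rintro ⟨b, hb⟩
      have := hb (hall (b + 1))
      omega
    show sSup _ = 0
    rw [csSup_of_not_bddAbove hub, csSup_empty]
    rfl
  · -- `1 ∉ I`; show every candidate depth is `0`.
    have hsub : {k | ∃ r d Z, IsStanleyDecomp (monomialCompl I) r d Z ∧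
        ∀ i, k ≤ (Z i).card} ⊆ {0} := by
      rintro k ⟨r, d, Z, ⟨hind, hsum⟩, hcard⟩
      simp only [Set.mem_singleton_iff]
      by_contra kne
      have hk1 : 1 ≤ k := Nat.one_le_iff_ne_zero.2 kne
      -- `r ≥ 1`, since the monomial complement contains `1`
      have hone : (monomial (0 : Fin n →₀ ℕ) (1 : K)) ∈ monomialCompl I :=
        Submodule.subset_span ⟨0, h1, rfl⟩
      rcases Nat.eq_zero_or_pos n with hn | hn
      · -- `n = 0`: every `Z i` is empty, and `r ≥ 1`
        subst hn
        rcases Nat.eq_zero_or_pos r with hr | hr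
        · subst hr
          rw [iSup_of_empty] at hsum
          rw [← hsum] at hone
          have : (monomial (0 : Fin 0 →₀ ℕ) (1 : K)) = 0 := hone
          simpa using (MvPolynomial.monomial_eq_zero).1 this
        · have := hcard ⟨0, hr⟩
          rw [Finset.eq_empty_of_isEmpty (Z ⟨0, hr⟩), Finset.card_empty] at this
          omega
      -- now `n = m + 1`
      obtain ⟨m, rfl⟩ : ∃ m, n = m + 1 := ⟨n - 1, by omega⟩
      set last : Fin (m + 1) := Fin.last m with hlastdef
      set δ : Fin (m + 1) →₀ ℕ := Finsupp.single last 1 with hδdef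
      set A : Fin r → Set (Fin (m + 1) →₀ ℕ) := fun i =>
        {c | ∃ e : Fin (m + 1) →₀ ℕ,
          (e.support : Set (Fin (m + 1))) ⊆ (Z i : Set (Fin (m + 1))) ∧ c = d i + e} with hA
      have hspace : ∀ i, stanleySpace K (d i) (Z i) =
          Submodule.span K {p | ∃ c ∈ A i, p = monomial c (1 : K)} := by
        intro i
        rw [stanleySpace]
        congr 1
        ext p
        constructor
        · rintro ⟨e, he, rfl⟩
          exact ⟨d i + e, ⟨e, he, rfl⟩, rfl⟩
        · rintro ⟨c, ⟨e, he, rfl⟩, rfl⟩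
          exact ⟨e, he, rfl⟩
      -- characterization of monomials outside `I`
      have hchar : ∀ c : Fin (m + 1) →₀ ℕ,
          (monomial c (1 : K) ∉ I) ↔ ∃ i, c ∈ A i := by
        intro c
        constructor
        · intro hcI
          have hmem : monomial c (1 : K) ∈ monomialCompl I :=
            Submodule.subset_span ⟨c, hcI, rfl⟩
          rw [← hsum] at hmem
          have heq : (⨆ i, stanleySpace K (d i) (Z i)) =
              Submodule.span K {p | ∃ c ∈ ⋃ i, A i, p = monomial c (1 : K)} := by
            simp only [hspace]
            rw [← Submodule.span_iUnion]
            congr 1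
            ext p
            simp only [Set.mem_iUnion, Set.mem_setOf_eq]
            constructor
            · rintro ⟨i, c, hci, rfl⟩
              exact ⟨c, ⟨i, hci⟩, rfl⟩
            · rintro ⟨c, ⟨i, hci⟩, rfl⟩
              exact ⟨i, c, hci, rfl⟩
          rw [heq] at hmem
          exact Set.mem_iUnion.1 (mem_span_monomials (A := ⋃ i, A i) hmem)
        · rintro ⟨i, hci⟩
          have hmem : monomial c (1 : K) ∈ monomialCompl I := by
            rw [← hsum]
            refine le_iSup (fun i => stanleySpace K (d i) (Z i)) i ?_
            show monomial c (1 : K) ∈ stanleySpace K (d i) (Z i)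
            rw [hspace i]
            exact Submodule.subset_span ⟨c, hci, rfl⟩
          have : c ∈ {e : Fin (m + 1) →₀ ℕ | monomial e (1 : K) ∉ I} :=
            mem_span_monomials (A := {e | monomial e (1 : K) ∉ I}) hmem
          exact this
      -- every variable occurring in some `Z i` is the last one
      have hZ : ∀ i, ∀ j ∈ Z i, j = last := by
        intro i j hj
        by_contra hne
        have hjm : (j : ℕ) < m := by
          rcases Fin.lt_or_eq_of_le (Fin.le_last j) with h' | h'
          · exact h'
          · exact absurd h' hne
        have hXj : X j ∈ I.radical :=
          hrad (Ideal.subset_span ⟨j, by omega, rfl⟩)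
        obtain ⟨s, hs⟩ := Ideal.mem_radical_iff.1 hXj
        have hin : monomial (d i + Finsupp.single j s) (1 : K) ∈ I := by
          have : monomial (d i) (1 : K) * X j ^ s ∈ I := Ideal.mul_mem_left I _ hs
          rwa [X_pow_eq_monomial, monomial_mul, one_mul] at this
        have hout : monomial (d i + Finsupp.single j s) (1 : K) ∉ I := by
          rw [hchar]
          refine ⟨i, Finsupp.single j s, ?_, rfl⟩
          intro x hx
          have := Finsupp.support_single_subset (Finset.mem_coe.1 hx)
          rw [Finset.mem_singleton] at this
          exact this ▸ hj
        exact hout hin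
      -- multiplying a monomial outside `I` by the last variable stays outside `I`
      have hδI : ∀ c : Fin (m + 1) →₀ ℕ,
          monomial c (1 : K) ∉ I → monomial (c + δ) (1 : K) ∉ I := by
        intro c hcI
        obtain ⟨i, e, he, rfl⟩ := (hchar c).1 hcI
        rw [hchar]
        have hlastZ : last ∈ Z i := by
          have : 0 < (Z i).card := lt_of_lt_of_le hk1 (hcard i)
          obtain ⟨j, hj⟩ := Finset.card_pos.1 this
          exact hZ i j hj ▸ hj
        refine ⟨i, e + δ, ?_, by rw [add_assoc]⟩
        intro x hx
        have := Finsupp.support_add (Finset.mem_coe.1 hx)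
        rw [Finset.mem_union] at this
        rcases this with h' | h'
        · exact he h'
        · have := Finsupp.support_single_subset h'
          rw [Finset.mem_singleton] at this
          exact this ▸ hlastZ
      -- membership in the colon ideal for monomials
      have hcol : ∀ e : Fin (m + 1) →₀ ℕ,
          monomial e (1 : K) ∈ colonGcd I ↔ monomial (e + gcdExp I) (1 : K) ∈ I := by
        intro e
        rw [colonGcd, Submodule.mem_colon]
        constructor
        · intro h
          have := h (monomial (gcdExp I) (1 : K)) (Ideal.subset_span rfl)
          rwa [smul_eq_mul, monomial_mul, one_mul] at this
        · intro h p hp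
          obtain ⟨a, rfl⟩ := Ideal.mem_span_singleton.1 hp
          rw [smul_eq_mul, ← mul_assoc, monomial_mul, one_mul]
          exact Ideal.mul_mem_right a I h
      -- the same stability holds for `I' = (I : v)`
      have hδI' : ∀ c : Fin (m + 1) →₀ ℕ,
          monomial c (1 : K) ∉ colonGcd I → monomial (c + δ) (1 : K) ∉ colonGcd I := by
        intro c hcI hmem
        rw [hcol] at hcI hmem
        refine hδI _ hcI ?_
        rwa [add_right_comm] at hmem
      -- since `c(I) = n`, the last variable divides some minimal generator of `I'`
      have hlastT : last ∈ {i : Fin (m + 1) | ∃ d ∈ minGens (colonGcd I), d i ≠ 0} := by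
        by_contra hnot
        have hsubT : {i : Fin (m + 1) | ∃ d ∈ minGens (colonGcd I), d i ≠ 0} ⊆
            (Set.univ : Set (Fin (m + 1))) \ {last} := fun i hi =>
          ⟨trivial, fun h => hnot (h ▸ hi)⟩
        have h2 := Set.ncard_le_ncard hsubT (Set.toFinite _)
        rw [Set.ncard_diff (by simp) (Set.toFinite _), Set.ncard_univ,
          Set.ncard_singleton, Nat.card_eq_fintype_card, Fintype.card_fin] at h2
        rw [numSupp] at hc
        omega
      obtain ⟨d', hd', hd'0⟩ := hlastT
      set e : Fin (m + 1) →₀ ℕ := d' - δ with hedef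
      have he_add : e + δ = d' := by
        ext i
        rcases eq_or_ne i last with rfl | hne
        · simp only [hedef, hδdef, Finsupp.add_apply, Finsupp.tsub_apply,
            Finsupp.single_eq_same]
          omega
        · simp [hedef, hδdef, Finsupp.single_eq_of_ne' (fun h => hne h.symm)]
      have he_le : e ≤ d' := by
        rw [Finsupp.le_def]
        intro i
        rw [hedef, Finsupp.tsub_apply]
        omega
      have he_ne : e ≠ d' := by
        intro h
        have h2 : d' + δ = d' := h ▸ he_add
        have := DFunLike.congr_fun h2 last
        simp only [Finsupp.add_apply, hδdef, Finsupp.single_eq_same] at this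
        omega
      have he_not : monomial e (1 : K) ∉ colonGcd I :=
        fun h => he_ne (hd'.2 e he_le h)
      exact hδI' e he_not (he_add ▸ hd'.1)
    rcases Set.subset_singleton_iff_eq.1 hsub with h | h
    · show sSup _ = 0
      rw [h, csSup_empty]
      rfl
    · show sSup _ = 0
      rw [h, csSup_singleton]
end

section
/- Let I ⊆ S = K[x_1,x_2,x_3] be a monomial ideal with g(I) = 3 and c(I) = 3 whose radical √I contains (x_1, x_2). Then sdepth(S/I) = 0. -/
open MvPolynomial

noncomputable section

section Aux
variable {K : Type*} [Field K] {n : ℕ}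

lemma mono_mem_of_le (I : Ideal (MvPolynomial (Fin n) K)) {e d : Fin n →₀ ℕ}
    (he : monomial e (1 : K) ∈ I) (hle : e ≤ d) : monomial d (1 : K) ∈ I := by
  have : monomial d (1 : K) = monomial (d - e) (1 : K) * monomial e (1 : K) := by
    rw [monomial_mul, one_mul, tsub_add_cancel_of_le hle]
  rw [this]
  exact Ideal.mul_mem_left _ _ he

lemma exists_minGen_le (I : Ideal (MvPolynomial (Fin n) K)) (d : Fin n →₀ ℕ)
    (hd : monomial d (1 : K) ∈ I) : ∃ g ∈ minGens I, g ≤ d := by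
  by_cases hmin : d ∈ minGens I
  · exact ⟨d, hmin, le_refl d⟩
  · simp only [minGens, Set.mem_setOf_eq] at hmin
    push_neg at hmin
    obtain ⟨e, he, heI, hne⟩ := hmin hd
    obtain ⟨g, hg, hge⟩ := exists_minGen_le I e heI
    exact ⟨g, hg, hge.trans he⟩
termination_by ∑ i, d i
decreasing_by
  obtain ⟨i, hi⟩ : ∃ i, e i ≠ d i := by
    by_contra hc; push_neg at hc; exact hne (Finsupp.ext hc)
  exact Finset.sum_lt_sum (fun i _ => he i) ⟨i, Finset.mem_univ i, lt_of_le_of_ne (he i) hi⟩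

end Aux

def coeffSupported (K : Type*) [Field K] {n : ℕ} (A : Set (Fin n →₀ ℕ)) :
    Submodule K (MvPolynomial (Fin n) K) where
  carrier := {p | ∀ v, coeff v p ≠ 0 → v ∈ A}
  add_mem' := by
    intro p q hp hq v hv
    by_cases h : coeff v p ≠ 0
    · exact hp v h
    · push_neg at h
      apply hq v
      simpa [coeff_add, h] using hv
  zero_mem' := by intro v hv; simp at hv
  smul_mem' := by
    intro c p hp v hv
    apply hp v
    intro h
    rw [coeff_smul, h, smul_zero] at hv
    exact hv rfl

lemma mem_of_monomial_mem_coeffSupported {K : Type*} [Field K] {n : ℕ}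
    {A : Set (Fin n →₀ ℕ)} {w : Fin n →₀ ℕ}
    (h : monomial w (1 : K) ∈ coeffSupported K A) : w ∈ A :=
  h w (by simp [coeff_monomial])

lemma span_le_coeffSupported {K : Type*} [Field K] {n : ℕ}
    {s : Set (MvPolynomial (Fin n) K)} {A : Set (Fin n →₀ ℕ)}
    (hs : ∀ p ∈ s, ∃ d ∈ A, p = monomial d (1 : K)) :
    Submodule.span K s ≤ coeffSupported K A := by
  rw [Submodule.span_le]
  intro p hp
  obtain ⟨d, hd, rfl⟩ := hs p hp
  intro v hv
  rw [coeff_monomial] at hv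
  split at hv
  · next h => exact h ▸ hd
  · exact absurd rfl hv

/-- For a monomial ideal `I ⊆ K[x_1,x_2,x_3]` with `g(I) = 3`, `c(I) = 3` and
`(x_1, x_2) ⊆ √I`, one has `sdepth(S/I) = 0`. -/
theorem stmt12 {K : Type*} [Field K] (I : Ideal (MvPolynomial (Fin 3) K))
    (hI : IsMonomialIdeal I) (hg : numGens I = 3) (hc : numSupp I = 3)
    (hrad : Ideal.span {(X 0 : MvPolynomial (Fin 3) K), X 1} ≤ I.radical) :
    sdepthQuot I = 0 := by
  -- Step 1: 1 ∉ I
  have hone : (monomial (0 : Fin 3 →₀ ℕ) (1 : K)) ∉ I := by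
    intro h
    have hmin : minGens I = {(0 : Fin 3 →₀ ℕ)} := by
      ext g
      constructor
      · rintro ⟨hgI, hgmin⟩
        exact (hgmin 0 zero_le h).symm
      · rintro rfl
        exact ⟨h, fun e he _ => le_antisymm he zero_le⟩
    rw [numGens, hmin] at hg
    simp at hg
  -- Step 2: minimal generators g1 (pure power of x0) and g2 (pure power of x1)
  have hX0 : (X 0 : MvPolynomial (Fin 3) K) ∈ I.radical := hrad (Ideal.subset_span (by simp))
  obtain ⟨a, ha⟩ := Ideal.mem_radical_iff.mp hX0
  rw [X_pow_eq_monomial] at ha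
  obtain ⟨g1, hg1, hg1le⟩ := exists_minGen_le I _ ha
  have hg1_1 : g1 1 = 0 := Nat.le_zero.mp (by simpa using hg1le 1)
  have hg1_2 : g1 2 = 0 := Nat.le_zero.mp (by simpa using hg1le 2)
  have hg1_0 : 1 ≤ g1 0 := by
    rcases Nat.eq_zero_or_pos (g1 0) with h0 | h0
    · exfalso
      apply hone
      have : g1 = 0 := by
        ext i
        fin_cases i <;> assumption
      rw [← this]
      exact hg1.1
    · exact h0
  have hX1 : (X 1 : MvPolynomial (Fin 3) K) ∈ I.radical := hrad (Ideal.subset_span (by simp))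
  obtain ⟨b, hb⟩ := Ideal.mem_radical_iff.mp hX1
  rw [X_pow_eq_monomial] at hb
  obtain ⟨g2, hg2, hg2le⟩ := exists_minGen_le I _ hb
  have hg2_0 : g2 0 = 0 := Nat.le_zero.mp (by simpa using hg2le 0)
  have hg2_2 : g2 2 = 0 := Nat.le_zero.mp (by simpa using hg2le 2)
  have hg2_1 : 1 ≤ g2 1 := by
    rcases Nat.eq_zero_or_pos (g2 1) with h0 | h0
    · exfalso
      apply hone
      have : g2 = 0 := by
        ext i
        fin_cases i <;> assumption
      rw [← this]
      exact hg2.1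
    · exact h0
  -- Step 3: colonGcd I = I
  have hgcd : gcdExp I = 0 := by
    ext i
    show sInf _ = 0
    rw [Nat.sInf_eq_zero]
    left
    fin_cases i
    · exact ⟨g2, hg2, hg2_0⟩
    · exact ⟨g1, hg1, hg1_1⟩
    · exact ⟨g1, hg1, hg1_2⟩
  have hcolon : colonGcd I = I := by
    unfold colonGcd
    rw [hgcd]
    have h1 : (monomial (0 : Fin 3 →₀ ℕ) (1 : K)) = 1 := by simp
    rw [h1, Ideal.span_singleton_one]
    ext x
    rw [Submodule.mem_colon]
    constructor
    · intro h
      simpa using h 1 Submodule.mem_top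
    · intro hx p _
      rw [smul_eq_mul]
      exact Ideal.mul_mem_right _ _ hx
  -- Step 4: a minimal generator u with u 2 ≠ 0
  have hfin : (minGens I).Finite := by
    by_contra h
    rw [numGens, Set.Infinite.ncard h] at hg
    exact absurd hg (by norm_num)
  have hT : {i : Fin 3 | ∃ d ∈ minGens I, d i ≠ 0} = Set.univ := by
    refine Set.eq_of_subset_of_ncard_le (Set.subset_univ _) ?_ Set.finite_univ
    unfold numSupp at hc
    rw [hcolon] at hc
    rw [hc, Set.ncard_univ]
    simp
  have h2mem : (2 : Fin 3) ∈ {i : Fin 3 | ∃ d ∈ minGens I, d i ≠ 0} := by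
    rw [hT]; trivial
  obtain ⟨u, hu, hu2⟩ := h2mem
  have hu2' : 1 ≤ u 2 := Nat.one_le_iff_ne_zero.mpr hu2
  -- Step 5: u 0 < g1 0, u 1 < g2 1
  have hu0 : u 0 < g1 0 := by
    by_contra h
    push_neg at h
    have hle : g1 ≤ u := by
      rw [Finsupp.le_def]
      intro i
      fin_cases i
      · exact h
      · simp [hg1_1]
      · simp [hg1_2]
    have heq := hu.2 g1 hle hg1.1
    rw [← heq] at hu2
    exact hu2 hg1_2
  have hu1 : u 1 < g2 1 := by
    by_contra h
    push_neg at h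
    have hle : g2 ≤ u := by
      rw [Finsupp.le_def]
      intro i
      fin_cases i
      · simp [hg2_0]
      · exact h
      · simp [hg2_2]
    have heq := hu.2 g2 hle hg2.1
    rw [← heq] at hu2
    exact hu2 hg2_2
  -- Step 6: minGens I = {g1, g2, u}
  have hg1g2 : g1 ≠ g2 := fun h => by rw [h, hg2_0] at hg1_0; omega
  have hg1u : g1 ≠ u := fun h => hu2 (h ▸ hg1_2)
  have hg2u : g2 ≠ u := fun h => hu2 (h ▸ hg2_2)
  have henum : minGens I = {g1, g2, u} := by
    symm
    refine Set.eq_of_subset_of_ncard_le ?_ ?_ hfin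
    · intro x hx
      rcases hx with h | h | h <;> (subst h; assumption)
    · rw [numGens] at hg
      rw [hg, Set.ncard_insert_of_notMem (by simp [hg1g2, hg1u]),
        Set.ncard_insert_of_notMem (by simp [hg2u]), Set.ncard_singleton]
  -- Step 7: the witness monomial w
  set w : Fin 3 →₀ ℕ :=
    Finsupp.single 0 (g1 0 - 1) + Finsupp.single 1 (g2 1 - 1) + Finsupp.single 2 (u 2 - 1)
    with hwdef
  have hw0 : w 0 = g1 0 - 1 := by simp [hwdef, Finsupp.single_apply]
  have hw1 : w 1 = g2 1 - 1 := by simp [hwdef, Finsupp.single_apply]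
  have hw2 : w 2 = u 2 - 1 := by simp [hwdef, Finsupp.single_apply]
  have hwI : monomial w (1 : K) ∉ I := by
    intro h
    obtain ⟨g, hgmem, hgle⟩ := exists_minGen_le I w h
    rw [henum] at hgmem
    rcases hgmem with h' | h' | h'
    · subst h'
      have := hgle 0
      rw [hw0] at this
      omega
    · subst h'
      have := hgle 1
      rw [hw1] at this
      omega
    · subst h'
      have := hgle 2
      rw [hw2] at this
      omega
  have hxw : ∀ j : Fin 3, monomial (w + Finsupp.single j 1) (1 : K) ∈ I := by
    intro j
    fin_cases j
    · apply mono_mem_of_le I hg1.1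
      rw [Finsupp.le_def]
      intro i
      fin_cases i
      · show g1 0 ≤ (w + Finsupp.single (0 : Fin 3) 1 : Fin 3 →₀ ℕ) 0
        simp [hw0, Finsupp.single_apply]
        omega
      · show g1 1 ≤ (w + Finsupp.single (0 : Fin 3) 1 : Fin 3 →₀ ℕ) 1
        simp [hg1_1]
      · show g1 2 ≤ (w + Finsupp.single (0 : Fin 3) 1 : Fin 3 →₀ ℕ) 2
        simp [hg1_2]
    · apply mono_mem_of_le I hg2.1
      rw [Finsupp.le_def]
      intro i
      fin_cases i
      · show g2 0 ≤ (w + Finsupp.single (1 : Fin 3) 1 : Fin 3 →₀ ℕ) 0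
        simp [hg2_0]
      · show g2 1 ≤ (w + Finsupp.single (1 : Fin 3) 1 : Fin 3 →₀ ℕ) 1
        simp [hw1, Finsupp.single_apply]
        omega
      · show g2 2 ≤ (w + Finsupp.single (1 : Fin 3) 1 : Fin 3 →₀ ℕ) 2
        simp [hg2_2]
    · apply mono_mem_of_le I hu.1
      rw [Finsupp.le_def]
      intro i
      fin_cases i
      · show u 0 ≤ (w + Finsupp.single (2 : Fin 3) 1 : Fin 3 →₀ ℕ) 0
        simp [hw0, Finsupp.single_apply]
        omega
      · show u 1 ≤ (w + Finsupp.single (2 : Fin 3) 1 : Fin 3 →₀ ℕ) 1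
        simp [hw1, Finsupp.single_apply]
        omega
      · show u 2 ≤ (w + Finsupp.single (2 : Fin 3) 1 : Fin 3 →₀ ℕ) 2
        simp [hw2, Finsupp.single_apply]
        omega
  -- Step 8: every element of the sdepth set is 0
  have hzero : ∀ k ∈ {k | ∃ r d Z, IsStanleyDecomp (monomialCompl I) r d Z ∧
      ∀ i, k ≤ (Z i).card}, k = 0 := by
    rintro k ⟨r, d, Z, ⟨hindep, hsum⟩, hcard⟩
    by_contra hk
    have hmem : monomial w (1 : K) ∈ monomialCompl I :=
      Submodule.subset_span ⟨w, hwI, rfl⟩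
    rw [← hsum] at hmem
    set A : Set (Fin 3 →₀ ℕ) :=
      {v | ∃ i : Fin r, ∃ e : Fin 3 →₀ ℕ,
        (e.support : Set (Fin 3)) ⊆ (Z i : Set (Fin 3)) ∧ v = d i + e} with hA
    have hsup_le : (⨆ i, stanleySpace K (d i) (Z i)) ≤ coeffSupported K A := by
      apply iSup_le
      intro i
      apply span_le_coeffSupported
      rintro p ⟨e, he, rfl⟩
      exact ⟨d i + e, ⟨i, e, he, rfl⟩, rfl⟩
    obtain ⟨i, e, he, hwe⟩ := mem_of_monomial_mem_coeffSupported (hsup_le hmem)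
    obtain ⟨j, hj⟩ := Finset.card_pos.mp (lt_of_lt_of_le (Nat.pos_of_ne_zero hk) (hcard i))
    have hsupp : ((e + Finsupp.single j 1).support : Set (Fin 3)) ⊆ (Z i : Set (Fin 3)) := by
      intro x hx
      have := Finsupp.support_add (g₁ := e) (g₂ := Finsupp.single j 1) hx
      rw [Finset.mem_union] at this
      rcases this with h' | h'
      · exact he h'
      · have : x = j := by
          have := Finsupp.support_single_subset h'
          simpa using this
        subst this
        exact hj
    have hm2 : monomial (d i + (e + Finsupp.single j 1)) (1 : K) ∈ monomialCompl I := by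
      rw [← hsum]
      exact le_iSup (fun i => stanleySpace K (d i) (Z i)) i
        (Submodule.subset_span ⟨e + Finsupp.single j 1, hsupp, rfl⟩)
    have hnotI : monomial (d i + (e + Finsupp.single j 1)) (1 : K) ∉ I := by
      have hle : monomialCompl I ≤ coeffSupported K {v | monomial v (1 : K) ∉ I} :=
        span_le_coeffSupported (by rintro p ⟨v, hv, rfl⟩; exact ⟨v, hv, rfl⟩)
      exact mem_of_monomial_mem_coeffSupported (hle hm2)
    apply hnotI
    have heq : d i + (e + Finsupp.single j 1) = w + Finsupp.single j 1 := by
      rw [← add_assoc, ← hwe]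
    rw [heq]
    exact hxw j
  -- Step 9: conclude
  unfold sdepthQuot sdepth
  rcases Set.subset_singleton_iff_eq.mp (fun k hk => hzero k hk) with h | h
  · rw [h]; simp
  · rw [h]; simp
end
end

section
/- Let I = (x_1^{a_1}, x_2^{b_1}x_3^{c_1}, x_1^{a_2}x_2^{b_2}x_3^{c_2}) ⊆ S = K[x_1,x_2,x_3], minimally generated by these three monomials, with √I = (x_1, x_2x_3). Then sdepth(S/I) = 0 if and only if (b_1 > b_2 and c_1 < c_2) or (b_1 < b_2 and c_1 > c_2); otherwise sdepth(S/I) = 1. -/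
open MvPolynomial

section Aux
variable {K : Type*} [Field K] {n : ℕ}

lemma mem_span_mono {A : Set (Fin n →₀ ℕ)} {p : MvPolynomial (Fin n) K} :
    p ∈ Submodule.span K ((fun f => monomial f (1:K)) '' A) ↔ ∀ f ∈ p.support, f ∈ A := by
  constructor
  · intro hp
    have : Submodule.span K ((fun f => monomial f (1:K)) '' A) ≤
        { carrier := {q : MvPolynomial (Fin n) K | ∀ f ∈ q.support, f ∈ A}
          add_mem' := by
            intro a b ha hb f hf
            rcases Finset.mem_union.mp (Finsupp.support_add hf) with h | h
            exacts [ha f h, hb f h]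
          zero_mem' := by simp
          smul_mem' := by
            intro c a ha f hf
            exact ha f (Finsupp.support_smul hf) } := by
      rw [Submodule.span_le]
      rintro q ⟨f, hf, rfl⟩ g hg
      rcases Finset.mem_singleton.mp (MvPolynomial.support_monomial_subset hg) with rfl
      exact hf
    exact this hp
  · intro h
    rw [← MvPolynomial.support_sum_monomial_coeff p]
    refine Submodule.sum_mem _ fun f hf => ?_
    have : (monomial f) (coeff f p) = (coeff f p) • (monomial f (1:K)) := by
      rw [smul_monomial, smul_eq_mul, mul_one]
    rw [this]
    exact Submodule.smul_mem _ _ (Submodule.subset_span ⟨f, h f hf, rfl⟩)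

/-- exponent set of a Stanley space -/
def ExpSet {n : ℕ} (d : Fin n →₀ ℕ) (Z : Finset (Fin n)) : Set (Fin n →₀ ℕ) :=
  {f | ∃ e : Fin n →₀ ℕ, (e.support : Set (Fin n)) ⊆ (Z : Set (Fin n)) ∧ f = d + e}

lemma stanleySpace_eq (d : Fin n →₀ ℕ) (Z : Finset (Fin n)) :
    stanleySpace K d Z = Submodule.span K ((fun f => monomial f (1:K)) '' ExpSet d Z) := by
  unfold stanleySpace
  congr 1
  ext p
  constructor
  · rintro ⟨e, he, rfl⟩; exact ⟨d + e, ⟨e, he, rfl⟩, rfl⟩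
  · rintro ⟨f, ⟨e, he, rfl⟩, rfl⟩; exact ⟨e, he, rfl⟩

lemma monomialCompl_eq (I : Ideal (MvPolynomial (Fin n) K)) :
    monomialCompl I = Submodule.span K
      ((fun f => monomial f (1:K)) '' {f | monomial f (1:K) ∉ I}) := by
  unfold monomialCompl
  congr 1
  ext p
  constructor
  · rintro ⟨e, he, rfl⟩; exact ⟨e, he, rfl⟩
  · rintro ⟨f, hf, rfl⟩; exact ⟨f, hf, rfl⟩

lemma support_monomial_one (w : Fin n →₀ ℕ) :
    (monomial w (1:K)).support = {w} := by
  classical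
  rw [MvPolynomial.support_monomial]
  simp

variable {ι : Type*} {I : Ideal (MvPolynomial (Fin n) K)}
  {d : ι → (Fin n →₀ ℕ)} {Z : ι → Finset (Fin n)}

lemma fact1 (hsum : (⨆ i, stanleySpace K (d i) (Z i)) = monomialCompl I)
    {w : Fin n →₀ ℕ} (hw : monomial w (1:K) ∉ I) :
    ∃ i, w ∈ ExpSet (d i) (Z i) := by
  have hmem : monomial w (1:K) ∈ (⨆ i, stanleySpace K (d i) (Z i)) := by
    rw [hsum, monomialCompl_eq]
    exact Submodule.subset_span ⟨w, hw, rfl⟩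
  simp_rw [stanleySpace_eq] at hmem
  rw [← Submodule.span_iUnion, ← Set.image_iUnion, mem_span_mono] at hmem
  have := hmem w (by rw [support_monomial_one]; exact Finset.mem_singleton_self w)
  simpa using this

lemma fact2 (hsum : (⨆ i, stanleySpace K (d i) (Z i)) = monomialCompl I)
    {w : Fin n →₀ ℕ} (i : ι) (hw : w ∈ ExpSet (d i) (Z i)) :
    monomial w (1:K) ∉ I := by
  have h1 : monomial w (1:K) ∈ stanleySpace K (d i) (Z i) := by
    rw [stanleySpace_eq]
    exact Submodule.subset_span ⟨w, hw, rfl⟩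
  have h2 : monomial w (1:K) ∈ monomialCompl I := by
    rw [← hsum]; exact le_iSup (fun i => stanleySpace K (d i) (Z i)) i h1
  rw [monomialCompl_eq, mem_span_mono] at h2
  have := h2 w (by rw [support_monomial_one]; exact Finset.mem_singleton_self w)
  exact this

lemma ExpSet_step {w e : Fin n →₀ ℕ} {dd : Fin n →₀ ℕ} {ZZ : Finset (Fin n)}
    (he : (e.support : Set (Fin n)) ⊆ (ZZ : Set (Fin n))) (hw : w = dd + e)
    {j : Fin n} (hj : j ∈ ZZ) :
    w + Finsupp.single j 1 ∈ ExpSet dd ZZ := by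
  refine ⟨e + Finsupp.single j 1, ?_, by rw [hw, add_assoc]⟩
  intro x hx
  rcases Finset.mem_union.mp (Finsupp.support_add (by exact_mod_cast hx)) with h | h
  · exact he h
  · rcases Finset.mem_singleton.mp (Finsupp.support_single_subset h) with rfl
    exact hj

lemma nat_sSup_eq_zero {s : Set ℕ} (h : ∀ k ∈ s, k = 0) : sSup s = 0 := by
  rcases s.eq_empty_or_nonempty with rfl | hs
  · simp
  · exact le_antisymm (csSup_le hs (fun k hk => (h k hk).le)) zero_le

end Aux

section Fin3
variable {K : Type*} [Field K]

/-- exponent vector (a,b,c) in Fin 3 →₀ ℕ -/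
noncomputable def F3 (a b c : ℕ) : Fin 3 →₀ ℕ :=
  Finsupp.single 0 a + Finsupp.single 1 b + Finsupp.single 2 c

@[simp] lemma F3_apply0 (a b c : ℕ) : F3 a b c 0 = a := by
  simp [F3, Finsupp.single_apply]
@[simp] lemma F3_apply1 (a b c : ℕ) : F3 a b c 1 = b := by
  simp [F3, Finsupp.single_apply]
@[simp] lemma F3_apply2 (a b c : ℕ) : F3 a b c 2 = c := by
  simp [F3, Finsupp.single_apply]

lemma le3_iff {f g : Fin 3 →₀ ℕ} : f ≤ g ↔ f 0 ≤ g 0 ∧ f 1 ≤ g 1 ∧ f 2 ≤ g 2 := by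
  rw [Finsupp.le_def]
  constructor
  · intro h; exact ⟨h 0, h 1, h 2⟩
  · rintro ⟨h0, h1, h2⟩ i; fin_cases i <;> assumption

lemma F3_le_iff {a b c : ℕ} {f : Fin 3 →₀ ℕ} :
    F3 a b c ≤ f ↔ a ≤ f 0 ∧ b ≤ f 1 ∧ c ≤ f 2 := by
  rw [le3_iff]; simp

lemma mem_expset_two {d : Fin 3 →₀ ℕ} {f : Fin 3 →₀ ℕ} :
    f ∈ ExpSet d ({2} : Finset (Fin 3)) ↔ f 0 = d 0 ∧ f 1 = d 1 ∧ d 2 ≤ f 2 := by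
  constructor
  · rintro ⟨e, he, rfl⟩
    have h0 : e 0 = 0 := by
      by_contra h
      have := he (Finsupp.mem_support_iff.mpr h)
      simp at this
    have h1 : e 1 = 0 := by
      by_contra h
      have := he (Finsupp.mem_support_iff.mpr h)
      simp at this
    simp [Finsupp.add_apply, h0, h1]
  · rintro ⟨h0, h1, h2⟩
    refine ⟨Finsupp.single 2 (f 2 - d 2), ?_, ?_⟩
    · intro x hx
      have hx' : x ∈ (Finsupp.single (2 : Fin 3) (f 2 - d 2)).support := by exact_mod_cast hx
      have := Finsupp.support_single_subset hx'
      simpa using this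
    · ext i
      fin_cases i <;> simp [Finsupp.add_apply, Finsupp.single_apply, h0, h1] <;> omega
lemma mem_expset_one {d : Fin 3 →₀ ℕ} {f : Fin 3 →₀ ℕ} :
    f ∈ ExpSet d ({1} : Finset (Fin 3)) ↔ f 0 = d 0 ∧ d 1 ≤ f 1 ∧ f 2 = d 2 := by
  constructor
  · rintro ⟨e, he, rfl⟩
    have h0 : e 0 = 0 := by
      by_contra h
      have := he (Finsupp.mem_support_iff.mpr h)
      simp at this
    have h2 : e 2 = 0 := by
      by_contra h
      have := he (Finsupp.mem_support_iff.mpr h)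
      simp at this
    simp [Finsupp.add_apply, h0, h2]
  · rintro ⟨h0, h1, h2⟩
    refine ⟨Finsupp.single 1 (f 1 - d 1), ?_, ?_⟩
    · intro x hx
      have hx' : x ∈ (Finsupp.single (1 : Fin 3) (f 1 - d 1)).support := by exact_mod_cast hx
      have := Finsupp.support_single_subset hx'
      simpa using this
    · ext i
      fin_cases i <;> simp [Finsupp.add_apply, Finsupp.single_apply, h0, h2] <;> omega

end Fin3

section Indep
variable {K : Type*} [Field K] {n : ℕ}

lemma disjoint_span_mono {A B : Set (Fin n →₀ ℕ)}
    (h : ∀ f, f ∈ A → f ∈ B → False) :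
    Disjoint (Submodule.span K ((fun f => monomial f (1:K)) '' A))
      (Submodule.span K ((fun f => monomial f (1:K)) '' B)) := by
  rw [Submodule.disjoint_def]
  intro p hA hB
  rw [mem_span_mono] at hA hB
  have : p.support = ∅ := by
    apply Finset.eq_empty_of_forall_notMem
    intro f hf
    exact h f (hA f hf) (hB f hf)
  exact MvPolynomial.support_eq_empty.mp this

lemma iSupIndep_span_mono {ι : Type*} {E : ι → Set (Fin n →₀ ℕ)}
    (h : ∀ t t', t ≠ t' → ∀ f, f ∈ E t → f ∈ E t' → False) :
    iSupIndep (fun t => Submodule.span K ((fun f => monomial f (1:K)) '' E t)) := by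
  intro t
  have hle : (⨆ (j) (_ : j ≠ t), Submodule.span K ((fun f => monomial f (1:K)) '' E j)) ≤
      Submodule.span K ((fun f => monomial f (1:K)) '' ⋃ (j) (_ : j ≠ t), E j) := by
    refine iSup_le fun j => iSup_le fun hj => Submodule.span_mono (Set.image_mono ?_)
    exact fun x hx => Set.mem_iUnion₂.mpr ⟨j, hj, hx⟩
  refine Disjoint.mono_right hle (disjoint_span_mono ?_)
  intro f hf hf'
  obtain ⟨j, hj, hfj⟩ := Set.mem_iUnion₂.mp hf'
  exact h t j (Ne.symm hj) f hf hfj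

lemma iSup_span_mono_eq {ι : Type*} (E : ι → Set (Fin n →₀ ℕ)) :
    (⨆ t, Submodule.span K ((fun f => monomial f (1:K)) '' E t)) =
      Submodule.span K ((fun f => monomial f (1:K)) '' ⋃ t, E t) := by
  rw [Set.image_iUnion, Submodule.span_iUnion]

end Indep

section Bounds
variable {K : Type*} [Field K] {n : ℕ}

lemma sdepthQuot_eq_zero_of_socle {I : Ideal (MvPolynomial (Fin n) K)} (w : Fin n →₀ ℕ)
    (hw : monomial w (1:K) ∉ I)
    (hsoc : ∀ j : Fin n, monomial (w + Finsupp.single j 1) (1:K) ∈ I) :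
    sdepthQuot I = 0 := by
  unfold sdepthQuot sdepth
  apply nat_sSup_eq_zero
  rintro k ⟨r, d, Z, ⟨hind, hsum⟩, hk⟩
  by_contra hk0
  have hk1 : 1 ≤ k := Nat.one_le_iff_ne_zero.mpr hk0
  obtain ⟨i, e, he, hwe⟩ := fact1 hsum hw
  obtain ⟨j, hj⟩ := Finset.card_pos.mp (lt_of_lt_of_le hk1 (hk i))
  exact fact2 hsum i (ExpSet_step he hwe hj) (hsoc j)

lemma sdepth_set_le_one {I : Ideal (MvPolynomial (Fin 3) K)}
    (h0 : monomial (0 : Fin 3 →₀ ℕ) (1:K) ∉ I)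
    (hx : ∃ m : Fin 3 →₀ ℕ, (m.support : Set (Fin 3)) ⊆ ({0} : Finset (Fin 3)) ∧
        monomial m (1:K) ∈ I)
    (hyz : ∃ m : Fin 3 →₀ ℕ, (m.support : Set (Fin 3)) ⊆ ({1, 2} : Finset (Fin 3)) ∧
        monomial m (1:K) ∈ I) :
    ∀ k ∈ {k | ∃ r d Z, IsStanleyDecomp (monomialCompl I) r d Z ∧ ∀ i, k ≤ (Z i).card},
      k ≤ 1 := by
  rintro k ⟨r, d, Z, ⟨hind, hsum⟩, hk⟩
  by_contra hk1
  have hk2 : 2 ≤ k := by omega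
  obtain ⟨i, e, he, hwe⟩ := fact1 hsum h0
  have hdi : d i = 0 := by
    have : d i ≤ d i + e := le_self_add
    rw [← hwe] at this
    exact le_antisymm this zero_le
  have hcard : 2 ≤ (Z i).card := le_trans hk2 (hk i)
  by_cases h0i : (0 : Fin 3) ∈ Z i
  · obtain ⟨m, hm1, hm2⟩ := hx
    have hm1' : (m.support : Set (Fin 3)) ⊆ (Z i : Set (Fin 3)) := by
      refine subset_trans hm1 ?_
      intro x hx'
      rcases Finset.mem_singleton.mp (by exact_mod_cast hx') with rfl
      exact h0i
    exact fact2 hsum i ⟨m, hm1', by rw [hdi, zero_add]⟩ hm2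
  · have hsub : Z i ⊆ ({1, 2} : Finset (Fin 3)) := by
      intro x hxx
      fin_cases x
      · exact absurd hxx h0i
      · simp
      · simp
    have hZi : Z i = ({1, 2} : Finset (Fin 3)) :=
      Finset.eq_of_subset_of_card_le hsub (by rw [Finset.card_pair (by decide)]; exact hcard)
    obtain ⟨m, hm1, hm2⟩ := hyz
    refine fact2 hsum i ⟨m, ?_, by rw [hdi, zero_add]⟩ hm2
    rw [hZi]; exact hm1

end Bounds

section Dec
variable {K : Type*} [Field K]
variable (a₁ a₂ b₁ b₂ c₁ c₂ : ℕ)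

def DecT : Type :=
  (Fin a₂ × (Fin b₁ ⊕ Fin c₁)) ⊕ (Fin (a₁ - a₂) × (Fin b₂ ⊕ Fin c₂))

instance : Fintype (DecT a₁ a₂ b₁ b₂ c₁ c₂) := by unfold DecT; infer_instance

noncomputable def decD : DecT a₁ a₂ b₁ b₂ c₁ c₂ → (Fin 3 →₀ ℕ)
  | .inl (i, .inl j) => F3 i j 0
  | .inl (i, .inr k) => F3 i b₁ k
  | .inr (i, .inl j) => F3 (a₂ + i) j 0
  | .inr (i, .inr k) => F3 (a₂ + i) b₂ k

def decZ : DecT a₁ a₂ b₁ b₂ c₁ c₂ → Finset (Fin 3)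
  | .inl (_, .inl _) => {2}
  | .inl (_, .inr _) => {1}
  | .inr (_, .inl _) => {2}
  | .inr (_, .inr _) => {1}

variable {a₁ a₂ b₁ b₂ c₁ c₂}

lemma mem_E_iff (t : DecT a₁ a₂ b₁ b₂ c₁ c₂) (f : Fin 3 →₀ ℕ) :
    f ∈ ExpSet (decD a₁ a₂ b₁ b₂ c₁ c₂ t) (decZ a₁ a₂ b₁ b₂ c₁ c₂ t) ↔
      (match t with
      | .inl (i, .inl j) => f 0 = i ∧ f 1 = j
      | .inl (i, .inr k) => f 0 = i ∧ b₁ ≤ f 1 ∧ f 2 = k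
      | .inr (i, .inl j) => f 0 = a₂ + i ∧ f 1 = j
      | .inr (i, .inr k) => f 0 = a₂ + i ∧ b₂ ≤ f 1 ∧ f 2 = k) := by
  rcases t with ⟨i, j | k⟩ | ⟨i, j | k⟩ <;>
    simp [decD, decZ, mem_expset_two, mem_expset_one, and_comm, and_assoc]


lemma dec_disj :
    ∀ t t' : DecT a₁ a₂ b₁ b₂ c₁ c₂, t ≠ t' →
      ∀ f, f ∈ ExpSet (decD a₁ a₂ b₁ b₂ c₁ c₂ t) (decZ a₁ a₂ b₁ b₂ c₁ c₂ t) →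
        f ∈ ExpSet (decD a₁ a₂ b₁ b₂ c₁ c₂ t') (decZ a₁ a₂ b₁ b₂ c₁ c₂ t') → False := by
  intro t t' hne f ht ht'
  rw [mem_E_iff] at ht ht'
  rcases t with ⟨i, j | k⟩ | ⟨i, j | k⟩ <;> rcases t' with ⟨i', j' | k'⟩ | ⟨i', j' | k'⟩
  · obtain ⟨h1, h2⟩ := ht; obtain ⟨h1', h2'⟩ := ht'
    have : i = i' := Fin.ext (by omega)
    have : j = j' := Fin.ext (by omega)
    subst_vars; exact hne rfl
  · obtain ⟨h1, h2⟩ := ht; obtain ⟨h1', h2', h3'⟩ := ht'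
    have := j.isLt; omega
  · obtain ⟨h1, h2⟩ := ht; obtain ⟨h1', h2'⟩ := ht'
    have := i.isLt; omega
  · obtain ⟨h1, h2⟩ := ht; obtain ⟨h1', h2', h3'⟩ := ht'
    have := i.isLt; omega
  · obtain ⟨h1, h2, h3⟩ := ht; obtain ⟨h1', h2'⟩ := ht'
    have := j'.isLt; omega
  · obtain ⟨h1, h2, h3⟩ := ht; obtain ⟨h1', h2', h3'⟩ := ht'
    have : i = i' := Fin.ext (by omega)
    have : k = k' := Fin.ext (by omega)
    subst_vars; exact hne rfl
  · obtain ⟨h1, h2, h3⟩ := ht; obtain ⟨h1', h2'⟩ := ht'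
    have := i.isLt; omega
  · obtain ⟨h1, h2, h3⟩ := ht; obtain ⟨h1', h2', h3'⟩ := ht'
    have := i.isLt; omega
  · obtain ⟨h1, h2⟩ := ht; obtain ⟨h1', h2'⟩ := ht'
    have := i'.isLt; omega
  · obtain ⟨h1, h2⟩ := ht; obtain ⟨h1', h2', h3'⟩ := ht'
    have := i'.isLt; omega
  · obtain ⟨h1, h2⟩ := ht; obtain ⟨h1', h2'⟩ := ht'
    have : i = i' := Fin.ext (by omega)
    have : j = j' := Fin.ext (by omega)
    subst_vars; exact hne rfl
  · obtain ⟨h1, h2⟩ := ht; obtain ⟨h1', h2', h3'⟩ := ht'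
    have := j.isLt; omega
  · obtain ⟨h1, h2, h3⟩ := ht; obtain ⟨h1', h2'⟩ := ht'
    have := i'.isLt; omega
  · obtain ⟨h1, h2, h3⟩ := ht; obtain ⟨h1', h2', h3'⟩ := ht'
    have := i'.isLt; omega
  · obtain ⟨h1, h2, h3⟩ := ht; obtain ⟨h1', h2'⟩ := ht'
    have := j'.isLt; omega
  · obtain ⟨h1, h2, h3⟩ := ht; obtain ⟨h1', h2', h3'⟩ := ht'
    have : i = i' := Fin.ext (by omega)
    have : k = k' := Fin.ext (by omega)
    subst_vars; exact hne rfl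


lemma dec_cover (haa : a₂ ≤ a₁) (hbb : b₂ ≤ b₁) (hcc : c₂ ≤ c₁) (f : Fin 3 →₀ ℕ) :
    (∃ t : DecT a₁ a₂ b₁ b₂ c₁ c₂,
        f ∈ ExpSet (decD a₁ a₂ b₁ b₂ c₁ c₂ t) (decZ a₁ a₂ b₁ b₂ c₁ c₂ t)) ↔
      (f 0 < a₁ ∧ (f 1 < b₁ ∨ f 2 < c₁) ∧ (f 0 < a₂ ∨ f 1 < b₂ ∨ f 2 < c₂)) := by
  constructor
  · rintro ⟨t, ht⟩
    rw [mem_E_iff] at ht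
    rcases t with ⟨i, j | k⟩ | ⟨i, j | k⟩
    · obtain ⟨h1, h2⟩ := ht
      have := i.isLt; have := j.isLt
      exact ⟨by omega, Or.inl (by omega), Or.inl (by omega)⟩
    · obtain ⟨h1, h2, h3⟩ := ht
      have := i.isLt; have := k.isLt
      exact ⟨by omega, Or.inr (by omega), Or.inl (by omega)⟩
    · obtain ⟨h1, h2⟩ := ht
      have := i.isLt; have := j.isLt
      exact ⟨by omega, Or.inl (by omega), Or.inr (Or.inl (by omega))⟩
    · obtain ⟨h1, h2, h3⟩ := ht
      have := i.isLt; have := k.isLt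
      exact ⟨by omega, Or.inr (by omega), Or.inr (Or.inr (by omega))⟩
  · rintro ⟨h1, h2, h3⟩
    by_cases hp : f 0 < a₂
    · by_cases hq : f 1 < b₁
      · exact ⟨.inl (⟨f 0, hp⟩, .inl ⟨f 1, hq⟩), (mem_E_iff _ f).mpr ⟨rfl, rfl⟩⟩
      · have hr : f 2 < c₁ := by omega
        exact ⟨.inl (⟨f 0, hp⟩, .inr ⟨f 2, hr⟩),
          (mem_E_iff _ f).mpr ⟨rfl, by omega, rfl⟩⟩
    · have h3' : f 1 < b₂ ∨ f 2 < c₂ := by omega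
      have hi : f 0 - a₂ < a₁ - a₂ := by omega
      have hfi : f 0 = a₂ + (f 0 - a₂) := by omega
      rcases h3' with hq | hr
      · exact ⟨.inr (⟨f 0 - a₂, hi⟩, .inl ⟨f 1, hq⟩), (mem_E_iff _ f).mpr ⟨hfi, rfl⟩⟩
      · by_cases hq : f 1 < b₂
        · exact ⟨.inr (⟨f 0 - a₂, hi⟩, .inl ⟨f 1, hq⟩), (mem_E_iff _ f).mpr ⟨hfi, rfl⟩⟩
        · exact ⟨.inr (⟨f 0 - a₂, hi⟩, .inr ⟨f 2, hr⟩),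
            (mem_E_iff _ f).mpr ⟨hfi, by omega, rfl⟩⟩


lemma one_mem_sdepth_set {I : Ideal (MvPolynomial (Fin 3) K)}
    (haa : a₂ ≤ a₁) (hbb : b₂ ≤ b₁) (hcc : c₂ ≤ c₁)
    (hmem : ∀ f : Fin 3 →₀ ℕ, monomial f (1:K) ∈ I ↔
      (a₁ ≤ f 0 ∨ (b₁ ≤ f 1 ∧ c₁ ≤ f 2) ∨ (a₂ ≤ f 0 ∧ b₂ ≤ f 1 ∧ c₂ ≤ f 2))) :
    ∃ r d Z, IsStanleyDecomp (monomialCompl I) r d Z ∧ ∀ i : Fin r, 1 ≤ (Z i).card := by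
  classical
  set T := DecT a₁ a₂ b₁ b₂ c₁ c₂ with hT
  let σ : Fin (Fintype.card T) ≃ T := (Fintype.equivFin T).symm
  refine ⟨Fintype.card T, fun i => decD a₁ a₂ b₁ b₂ c₁ c₂ (σ i),
    fun i => decZ a₁ a₂ b₁ b₂ c₁ c₂ (σ i), ⟨?_, ?_⟩, ?_⟩
  · have h : iSupIndep (fun t : T =>
        stanleySpace K (decD a₁ a₂ b₁ b₂ c₁ c₂ t) (decZ a₁ a₂ b₁ b₂ c₁ c₂ t)) := by
      simp only [stanleySpace_eq]
      exact iSupIndep_span_mono dec_disj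
    exact h.comp σ.injective
  · have hs : (⨆ t : T, stanleySpace K (decD a₁ a₂ b₁ b₂ c₁ c₂ t)
        (decZ a₁ a₂ b₁ b₂ c₁ c₂ t)) = monomialCompl I := by
      simp only [stanleySpace_eq]
      rw [iSup_span_mono_eq, monomialCompl_eq]
      have hset : (⋃ t, ExpSet (decD a₁ a₂ b₁ b₂ c₁ c₂ t) (decZ a₁ a₂ b₁ b₂ c₁ c₂ t)) =
          {f : Fin 3 →₀ ℕ | monomial f (1:K) ∉ I} := by
        ext f
        rw [Set.mem_iUnion]
        have := dec_cover (a₁ := a₁) (b₁ := b₁) (c₁ := c₁) haa hbb hcc f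
        rw [this, Set.mem_setOf_eq, hmem f]
        omega
      rw [hset]
    exact (Equiv.iSup_comp (g := fun t : T =>
      stanleySpace K (decD a₁ a₂ b₁ b₂ c₁ c₂ t) (decZ a₁ a₂ b₁ b₂ c₁ c₂ t)) σ).trans hs
  · have h : ∀ t : T, 1 ≤ (decZ a₁ a₂ b₁ b₂ c₁ c₂ t).card := by
      rintro (⟨_, _ | _⟩ | ⟨_, _ | _⟩) <;> simp [decZ]
    exact fun i => h (σ i)


lemma main_notbad {I : Ideal (MvPolynomial (Fin 3) K)}
    (ha : a₂ < a₁) (ha2 : 1 ≤ a₂) (hbb : b₂ ≤ b₁) (hcc : c₂ ≤ c₁) (hbc : 1 ≤ b₁ ∨ 1 ≤ c₁)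
    (hmem : ∀ f : Fin 3 →₀ ℕ, monomial f (1:K) ∈ I ↔
      (a₁ ≤ f 0 ∨ (b₁ ≤ f 1 ∧ c₁ ≤ f 2) ∨ (a₂ ≤ f 0 ∧ b₂ ≤ f 1 ∧ c₂ ≤ f 2))) :
    sdepthQuot I = 1 := by
  have h1 : (1:ℕ) ∈ {k | ∃ r d Z, IsStanleyDecomp (monomialCompl I) r d Z ∧
      ∀ i, k ≤ (Z i).card} := one_mem_sdepth_set ha.le hbb hcc hmem
  have h0 : monomial (0 : Fin 3 →₀ ℕ) (1:K) ∉ I := by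
    rw [hmem]
    simp only [Finsupp.coe_zero, Pi.zero_apply]
    omega
  have hx : ∃ m : Fin 3 →₀ ℕ, (m.support : Set (Fin 3)) ⊆ ({0} : Finset (Fin 3)) ∧
      monomial m (1:K) ∈ I := by
    refine ⟨Finsupp.single 0 a₁, ?_, ?_⟩
    · intro x hx'
      have := Finsupp.support_single_subset
        (by exact_mod_cast hx' : x ∈ (Finsupp.single (0 : Fin 3) a₁).support)
      simpa using this
    · rw [hmem]
      left
      simp
  have hyz : ∃ m : Fin 3 →₀ ℕ, (m.support : Set (Fin 3)) ⊆ ({1, 2} : Finset (Fin 3)) ∧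
      monomial m (1:K) ∈ I := by
    refine ⟨Finsupp.single 1 b₁ + Finsupp.single 2 c₁, ?_, ?_⟩
    · intro x hx'
      have hx'' : x ∈ ((Finsupp.single (1 : Fin 3) b₁ +
          Finsupp.single (2 : Fin 3) c₁).support) := by exact_mod_cast hx'
      rcases Finset.mem_union.mp (Finsupp.support_add hx'') with h | h
      · have := Finsupp.support_single_subset h; simp at this; simp [this]
      · have := Finsupp.support_single_subset h; simp at this; simp [this]
    · rw [hmem]
      right; left
      constructor <;> simp [Finsupp.add_apply, Finsupp.single_apply]
  unfold sdepthQuot sdepth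
  refine le_antisymm (csSup_le ⟨1, h1⟩ (sdepth_set_le_one h0 hx hyz)) (le_csSup ?_ h1)
  refine ⟨3, ?_⟩
  rintro k ⟨r, d, Z, ⟨hind, hsum⟩, hk⟩
  have hr : r ≠ 0 := by
    rintro rfl
    have : monomial (0 : Fin 3 →₀ ℕ) (1:K) ∈ monomialCompl I := by
      rw [monomialCompl_eq]
      exact Submodule.subset_span ⟨0, h0, rfl⟩
    rw [← hsum] at this
    rw [iSup_of_empty] at this
    rw [Submodule.mem_bot] at this
    exact (one_ne_zero : (1:K) ≠ 0) (by simpa using this)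
  exact le_trans (hk ⟨0, Nat.pos_of_ne_zero hr⟩)
    (le_trans (Finset.card_le_univ _) (by simp))

lemma main_bad {I : Ideal (MvPolynomial (Fin 3) K)}
    (ha : a₂ < a₁)
    (hbad : (b₂ < b₁ ∧ c₁ < c₂) ∨ (b₁ < b₂ ∧ c₂ < c₁))
    (hmem : ∀ f : Fin 3 →₀ ℕ, monomial f (1:K) ∈ I ↔
      (a₁ ≤ f 0 ∨ (b₁ ≤ f 1 ∧ c₁ ≤ f 2) ∨ (a₂ ≤ f 0 ∧ b₂ ≤ f 1 ∧ c₂ ≤ f 2))) :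
    sdepthQuot I = 0 := by
  rcases hbad with ⟨hb, hc⟩ | ⟨hb, hc⟩
  · refine sdepthQuot_eq_zero_of_socle (F3 (a₁ - 1) (b₁ - 1) (c₂ - 1)) ?_ ?_
    · rw [hmem]
      simp only [F3_apply0, F3_apply1, F3_apply2]
      omega
    · intro j
      fin_cases j <;>
      · rw [hmem]
        simp only [Finsupp.add_apply, Finsupp.single_apply, F3_apply0, F3_apply1, F3_apply2]
        simp only [Fin.ext_iff, Fin.val_zero, Fin.val_one, Fin.val_two]
        norm_num
        try omega
  · refine sdepthQuot_eq_zero_of_socle (F3 (a₁ - 1) (b₂ - 1) (c₁ - 1)) ?_ ?_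
    · rw [hmem]
      simp only [F3_apply0, F3_apply1, F3_apply2]
      omega
    · intro j
      fin_cases j <;>
      · rw [hmem]
        simp only [Finsupp.add_apply, Finsupp.single_apply, F3_apply0, F3_apply1, F3_apply2]
        simp only [Fin.ext_iff, Fin.val_zero, Fin.val_one, Fin.val_two]
        norm_num
        try omega

end Dec


/-- Let `I = (x_1^{a_1}, x_2^{b_1} x_3^{c_1}, x_1^{a_2} x_2^{b_2} x_3^{c_2})`
be minimally generated by these three monomials, with `√I = (x_1, x_2 x_3)`.
Then `sdepth(S/I) = 0` iff `(b_1 > b_2 ∧ c_1 < c_2) ∨ (b_1 < b_2 ∧ c_1 > c_2)`;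
otherwise `sdepth(S/I) = 1`. -/
theorem stmt13 {K : Type*} [Field K] (I : Ideal (MvPolynomial (Fin 3) K))
    (a₁ a₂ b₁ b₂ c₁ c₂ : ℕ) (d₁ d₂ d₃ : Fin 3 →₀ ℕ)
    (hd₁ : d₁ = Finsupp.single 0 a₁)
    (hd₂ : d₂ = Finsupp.single 1 b₁ + Finsupp.single 2 c₁)
    (hd₃ : d₃ = Finsupp.single 0 a₂ + Finsupp.single 1 b₂ + Finsupp.single 2 c₂)
    (hIdef : I = Ideal.span {monomial d₁ (1 : K), monomial d₂ (1 : K), monomial d₃ (1 : K)})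
    (hmin : minGens I = {d₁, d₂, d₃}) (hg : numGens I = 3)
    (hrad : I.radical = Ideal.span {(X 0 : MvPolynomial (Fin 3) K), X 1 * X 2}) :
    (sdepthQuot I = 0 ↔ ((b₁ > b₂ ∧ c₁ < c₂) ∨ (b₁ < b₂ ∧ c₁ > c₂))) ∧
    (¬ ((b₁ > b₂ ∧ c₁ < c₂) ∨ (b₁ < b₂ ∧ c₁ > c₂)) → sdepthQuot I = 1) := by
  -- membership characterization
  have hmem : ∀ f : Fin 3 →₀ ℕ, monomial f (1:K) ∈ I ↔
      (a₁ ≤ f 0 ∨ (b₁ ≤ f 1 ∧ c₁ ≤ f 2) ∨ (a₂ ≤ f 0 ∧ b₂ ≤ f 1 ∧ c₂ ≤ f 2)) := by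
    intro f
    have himg : ({monomial d₁ (1:K), monomial d₂ 1, monomial d₃ 1} :
        Set (MvPolynomial (Fin 3) K)) =
        (fun s => monomial s (1:K)) '' {d₁, d₂, d₃} := by
      simp [Set.image_insert_eq]
    rw [hIdef, himg, mem_ideal_span_monomial_image, support_monomial_one]
    simp only [Finset.mem_singleton, forall_eq, Set.mem_insert_iff, Set.mem_singleton_iff,
      exists_eq_or_imp, exists_eq_left]
    have e1 : d₁ ≤ f ↔ a₁ ≤ f 0 := by
      rw [le3_iff, hd₁]
      simp [Finsupp.single_apply]
    have e2 : d₂ ≤ f ↔ b₁ ≤ f 1 ∧ c₁ ≤ f 2 := by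
      rw [le3_iff, hd₂]
      simp [Finsupp.add_apply, Finsupp.single_apply]
    have e3 : d₃ ≤ f ↔ a₂ ≤ f 0 ∧ b₂ ≤ f 1 ∧ c₂ ≤ f 2 := by
      rw [le3_iff, hd₃]
      simp [Finsupp.add_apply, Finsupp.single_apply]
    rw [e1, e2, e3]
  -- minimal generator facts
  have hd1m : d₁ ∈ minGens I := by rw [hmin]; exact Set.mem_insert _ _
  have hd2m : d₂ ∈ minGens I := by rw [hmin]; exact Set.mem_insert_of_mem _ (Set.mem_insert _ _)
  have hd3m : d₃ ∈ minGens I := by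
    rw [hmin]; exact Set.mem_insert_of_mem _ (Set.mem_insert_of_mem _ rfl)
  -- distinctness
  have hg' : ({d₁, d₂, d₃} : Set (Fin 3 →₀ ℕ)).ncard = 3 := by
    rw [← hmin]; exact hg
  have hpair : ∀ x y : Fin 3 →₀ ℕ, ({x, y} : Set (Fin 3 →₀ ℕ)).ncard ≤ 2 :=
    fun x y => le_trans (Set.ncard_insert_le _ _) (by simp)
  have hne12 : d₁ ≠ d₂ := by
    rintro rfl
    have hset : ({d₁, d₁, d₃} : Set (Fin 3 →₀ ℕ)) = {d₁, d₃} := by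
      ext x; simp
    rw [hset] at hg'
    have := hpair d₁ d₃
    omega
  have hne13 : d₁ ≠ d₃ := by
    rintro rfl
    have hset : ({d₁, d₂, d₁} : Set (Fin 3 →₀ ℕ)) = {d₁, d₂} := by
      ext x; simp; tauto
    rw [hset] at hg'
    have := hpair d₁ d₂
    omega
  have hne23 : d₂ ≠ d₃ := by
    rintro rfl
    have hset : ({d₁, d₂, d₂} : Set (Fin 3 →₀ ℕ)) = {d₁, d₂} := by
      ext x; simp
    rw [hset] at hg'
    have := hpair d₁ d₂
    omega
  -- non-divisibility facts
  have hnle13 : ¬ (d₁ ≤ d₃) := fun h => hne13 (hd3m.2 d₁ h hd1m.1)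
  have hnle23 : ¬ (d₂ ≤ d₃) := fun h => hne23 (hd3m.2 d₂ h hd2m.1)
  have hnle32 : ¬ (d₃ ≤ d₂) := fun h => hne23 (Eq.symm (hd2m.2 d₃ h hd3m.1))
  have hnle21 : ¬ (d₂ ≤ d₁) := fun h => hne12 (Eq.symm (hd1m.2 d₂ h hd2m.1))
  -- arithmetic versions
  have hB : a₂ < a₁ := by
    by_contra h
    push_neg at h
    refine hnle13 (le3_iff.mpr ?_)
    rw [hd₁, hd₃]
    simp [Finsupp.add_apply, Finsupp.single_apply]
    omega
  have hC : ¬ (b₁ ≤ b₂ ∧ c₁ ≤ c₂) := by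
    rintro ⟨h1, h2⟩
    refine hnle23 (le3_iff.mpr ?_)
    rw [hd₂, hd₃]
    simp [Finsupp.add_apply, Finsupp.single_apply]
    omega
  have hD : ¬ (a₂ = 0 ∧ b₂ ≤ b₁ ∧ c₂ ≤ c₁) := by
    rintro ⟨h1, h2, h3⟩
    refine hnle32 (le3_iff.mpr ?_)
    rw [hd₂, hd₃]
    simp [Finsupp.add_apply, Finsupp.single_apply]
    omega
  have hA : 1 ≤ b₁ ∨ 1 ≤ c₁ := by
    by_contra h
    push_neg at h
    refine hnle21 (le3_iff.mpr ?_)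
    rw [hd₁, hd₂]
    simp [Finsupp.add_apply, Finsupp.single_apply]
    omega
  -- two branches
  have hone : ¬ ((b₁ > b₂ ∧ c₁ < c₂) ∨ (b₁ < b₂ ∧ c₁ > c₂)) → sdepthQuot I = 1 := by
    intro hnb
    have hbb : b₂ ≤ b₁ := by omega
    have hcc : c₂ ≤ c₁ := by omega
    have ha2 : 1 ≤ a₂ := by omega
    exact main_notbad hB ha2 hbb hcc hA hmem
  refine ⟨⟨?_, ?_⟩, hone⟩
  · intro h0
    by_contra hbad
    have := hone hbad
    omega
  · intro hbad
    refine main_bad hB ?_ hmem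
    rcases hbad with ⟨h1, h2⟩ | ⟨h1, h2⟩
    · exact Or.inl ⟨h1, h2⟩
    · exact Or.inr ⟨h1, h2⟩
end

section
/- Let I ⊆ S = K[x_1,x_2,x_3] be a monomial ideal with g(I) = m > 3 and c(I) = 3, and write G(I) = {u_1,…,u_m}. For each subset σ ⊆ [m] with |σ| = 3 let I_σ = (u_{σ(1)}, u_{σ(2)}, u_{σ(3)}). If sdepth(S/I_σ) = 1 for all such σ, then sdepth(S/I) = 1; otherwise, if I ≠ (I : (x_1,x_2,x_3)), then sdepth(S/I) = 0. In particular, if I ≠ I^sat then there exist three distinct minimal generators u_1, u_2, u_3 ∈ G(I) with sdepth(S/(u_1,u_2,u_3)) = 0. -/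
open MvPolynomial

namespace SD
open MvPolynomial

variable {K : Type*} [Field K] {n : ℕ}

/-- The submodule of polynomials supported in a set `M` of exponents. -/
def suppSet (K : Type*) [Field K] {n : ℕ} (M : Set (Fin n →₀ ℕ)) :
    Submodule K (MvPolynomial (Fin n) K) where
  carrier := {p | ∀ e ∈ p.support, e ∈ M}
  add_mem' := by
    intro a b ha hb e he
    rcases Finset.mem_union.mp (MvPolynomial.support_add he) with h | h
    · exact ha e h
    · exact hb e h
  zero_mem' := by simp
  smul_mem' := by
    intro c p hp e he
    exact hp e (MvPolynomial.support_smul he)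

lemma mem_suppSet {M : Set (Fin n →₀ ℕ)} {p : MvPolynomial (Fin n) K} :
    p ∈ suppSet K M ↔ ∀ e ∈ p.support, e ∈ M := Iff.rfl

lemma monomial_mem_suppSet {M : Set (Fin n →₀ ℕ)} {e : Fin n →₀ ℕ} :
    monomial e (1 : K) ∈ suppSet K M ↔ e ∈ M := by
  classical
  simp [mem_suppSet, MvPolynomial.support_monomial]

lemma suppSet_mono {M M' : Set (Fin n →₀ ℕ)} (h : M ⊆ M') :
    suppSet K M ≤ suppSet K M' := fun _ hp e he => h (hp e he)

lemma suppSet_empty : suppSet K (∅ : Set (Fin n →₀ ℕ)) = ⊥ := by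
  ext p
  simp only [mem_suppSet, Submodule.mem_bot]
  constructor
  · intro h
    by_contra hp
    obtain ⟨e, he⟩ := Finset.nonempty_iff_ne_empty.mpr
      (fun hh => hp (MvPolynomial.support_eq_empty.mp hh))
    exact h e he
  · rintro rfl e he; simp at he

lemma suppSet_le_span {M : Set (Fin n →₀ ℕ)} {W : Submodule K (MvPolynomial (Fin n) K)}
    (h : ∀ e ∈ M, monomial e (1 : K) ∈ W) : suppSet K M ≤ W := by
  intro p hp
  rw [← MvPolynomial.support_sum_monomial_coeff p]
  refine Submodule.sum_mem _ ?_
  intro v hv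
  have : (monomial v) (coeff v p) = (coeff v p) • monomial v (1 : K) := by
    rw [MvPolynomial.smul_monomial, smul_eq_mul, mul_one]
  rw [this]
  exact Submodule.smul_mem _ _ (h v (hp v hv))

/-- Exponent set of a Stanley space. -/
def pieceSet (d : Fin n →₀ ℕ) (Z : Finset (Fin n)) : Set (Fin n →₀ ℕ) :=
  {e | d ≤ e ∧ ∀ c ∉ Z, e c = d c}

lemma mem_pieceSet_iff {d : Fin n →₀ ℕ} {Z : Finset (Fin n)} {e : Fin n →₀ ℕ} :
    e ∈ pieceSet d Z ↔ ∃ f : Fin n →₀ ℕ, (f.support : Set (Fin n)) ⊆ (Z : Set (Fin n)) ∧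
      e = d + f := by
  constructor
  · rintro ⟨h1, h2⟩
    refine ⟨e - d, ?_, (add_tsub_cancel_of_le h1).symm⟩
    intro c hc
    simp only [Finset.coe_subset, Finset.mem_coe, Finsupp.mem_support_iff] at hc ⊢
    by_contra hcZ
    apply hc
    have := h2 c hcZ
    simp [Finsupp.tsub_apply, this]
  · rintro ⟨f, hf, rfl⟩
    constructor
    · exact le_self_add
    · intro c hc
      have : f c = 0 := by
        by_contra h0
        exact hc (hf (by simpa [Finsupp.mem_support_iff] using h0))
      simp [this]

lemma stanleySpace_eq_suppSet (d : Fin n →₀ ℕ) (Z : Finset (Fin n)) :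
    stanleySpace K d Z = suppSet K (pieceSet d Z) := by
  apply le_antisymm
  · rw [stanleySpace, Submodule.span_le]
    rintro p ⟨e, he, rfl⟩
    intro v hv
    classical
    rw [MvPolynomial.support_monomial] at hv
    simp only [one_ne_zero, if_false, Finset.mem_singleton] at hv
    subst hv
    exact mem_pieceSet_iff.mpr ⟨e, he, rfl⟩
  · apply suppSet_le_span
    intro e he
    rcases mem_pieceSet_iff.mp he with ⟨f, hf, rfl⟩
    exact Submodule.subset_span ⟨f, hf, rfl⟩

lemma monomialCompl_eq_suppSet (I : Ideal (MvPolynomial (Fin n) K)) :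
    monomialCompl I = suppSet K {e | monomial e (1 : K) ∉ I} := by
  apply le_antisymm
  · rw [monomialCompl, Submodule.span_le]
    rintro p ⟨e, he, rfl⟩
    intro v hv
    classical
    rw [MvPolynomial.support_monomial] at hv
    simp only [one_ne_zero, if_false, Finset.mem_singleton] at hv
    subst hv
    exact he
  · apply suppSet_le_span
    intro e he
    exact Submodule.subset_span ⟨e, he, rfl⟩

lemma monomial_mem_monomialCompl {I : Ideal (MvPolynomial (Fin n) K)} {e : Fin n →₀ ℕ} :
    monomial e (1 : K) ∈ monomialCompl I ↔ monomial e (1 : K) ∉ I := by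
  rw [monomialCompl_eq_suppSet, monomial_mem_suppSet]; rfl

/-- a monomial in a sup of `suppSet`s lies in one of the exponent sets. -/
lemma exists_of_monomial_mem_iSup {r : ℕ} {M : Fin r → Set (Fin n →₀ ℕ)} {w : Fin n →₀ ℕ}
    (h : monomial w (1 : K) ∈ ⨆ i, suppSet K (M i)) : ∃ i, w ∈ M i := by
  have hle : (⨆ i, suppSet K (M i)) ≤ suppSet K (⋃ i, M i) := by
    exact iSup_le fun i => suppSet_mono (Set.subset_iUnion M i)
  have := monomial_mem_suppSet.mp (hle h)
  simpa using this

/-- monomials of an ideal are upward closed. -/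
lemma monomial_mem_of_le {I : Ideal (MvPolynomial (Fin n) K)} {f e : Fin n →₀ ℕ}
    (hle : f ≤ e) (hf : monomial f (1 : K) ∈ I) : monomial e (1 : K) ∈ I := by
  have : monomial e (1 : K) = monomial (e - f) (1 : K) * monomial f (1 : K) := by
    rw [MvPolynomial.monomial_mul, one_mul, tsub_add_cancel_of_le hle]
  rw [this]
  exact Ideal.mul_mem_left _ _ hf

lemma exists_minGen_le {I : Ideal (MvPolynomial (Fin n) K)} {w : Fin n →₀ ℕ}
    (hw : monomial w (1 : K) ∈ I) : ∃ g ∈ minGens I, g ≤ w := by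
  classical
  -- strong induction on total degree
  generalize hdeg : (∑ c, w c) = D
  induction D using Nat.strong_induction_on generalizing w with
  | _ D ih =>
    by_cases hmin : ∀ e : Fin n →₀ ℕ, e ≤ w → monomial e (1:K) ∈ I → e = w
    · exact ⟨w, ⟨hw, hmin⟩, le_rfl⟩
    · push_neg at hmin
      obtain ⟨e, hle, he, hne⟩ := hmin
      have hlt : (∑ c, e c) < D := by
        subst hdeg
        have hstrict : ∃ c, e c < w c := by
          by_contra hc
          push_neg at hc
          exact hne (le_antisymm hle (Finsupp.le_def.mpr hc))
        obtain ⟨c, hc⟩ := hstrict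
        exact Finset.sum_lt_sum (fun i _ => Finsupp.le_def.mp hle i) ⟨c, Finset.mem_univ c, hc⟩
      obtain ⟨g, hg, hgle⟩ := ih _ hlt he rfl
      exact ⟨g, hg, hgle.trans hle⟩

end SD
namespace SD
open MvPolynomial

variable {K : Type*} [Field K] {n : ℕ}

lemma sdepth_le {V : Submodule K (MvPolynomial (Fin n) K)} {b : ℕ}
    (h : ∀ k r d Z, IsStanleyDecomp V r d Z → (∀ i, k ≤ (Z i).card) → k ≤ b) :
    sdepth V ≤ b := by
  apply csSup_le'
  rintro k ⟨r, d, Z, hd, hk⟩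
  exact h k r d Z hd hk

lemma le_sdepth {V : Submodule K (MvPolynomial (Fin n) K)} {k r : ℕ}
    {d : Fin r → (Fin n →₀ ℕ)} {Z : Fin r → Finset (Fin n)}
    (hV : V ≠ ⊥) (hd : IsStanleyDecomp V r d Z) (hk : ∀ i, k ≤ (Z i).card) :
    k ≤ sdepth V := by
  apply le_csSup
  · refine ⟨n, ?_⟩
    rintro k' ⟨r', d', Z', hd', hk'⟩
    rcases Nat.eq_zero_or_pos r' with hr | hr
    · exfalso
      apply hV
      rw [← hd'.2]
      subst hr
      exact iSup_of_empty _
    · have i0 : Fin r' := ⟨0, hr⟩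
      calc k' ≤ (Z' i0).card := hk' i0
        _ ≤ (Finset.univ : Finset (Fin n)).card := Finset.card_le_card (Finset.subset_univ _)
        _ = n := by simp
  · exact ⟨r, d, Z, hd, hk⟩

/-- Every monomial not in `I` lies in some piece of a Stanley decomposition of `I^c`. -/
lemma exists_piece {I : Ideal (MvPolynomial (Fin n) K)} {r : ℕ}
    {d : Fin r → (Fin n →₀ ℕ)} {Z : Fin r → Finset (Fin n)}
    (hd : IsStanleyDecomp (monomialCompl I) r d Z) {w : Fin n →₀ ℕ}
    (hw : monomial w (1 : K) ∉ I) : ∃ i, w ∈ pieceSet (d i) (Z i) := by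
  have hwmem : monomial w (1 : K) ∈ ⨆ i, stanleySpace K (d i) (Z i) := by
    rw [hd.2]
    exact monomial_mem_monomialCompl.mpr hw
  have : monomial w (1 : K) ∈ ⨆ i, suppSet K (pieceSet (d i) (Z i)) := by
    simpa only [stanleySpace_eq_suppSet] using hwmem
  exact exists_of_monomial_mem_iSup this

/-- Stepping inside a piece in a direction of its `Z` stays outside `I`. -/
lemma step_notin {I : Ideal (MvPolynomial (Fin n) K)} {r : ℕ}
    {d : Fin r → (Fin n →₀ ℕ)} {Z : Fin r → Finset (Fin n)}
    (hd : IsStanleyDecomp (monomialCompl I) r d Z) {w : Fin n →₀ ℕ} {i : Fin r}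
    (hwi : w ∈ pieceSet (d i) (Z i)) {c : Fin n} (hc : c ∈ Z i) :
    monomial (w + Finsupp.single c 1) (1 : K) ∉ I := by
  have hmem2 : w + Finsupp.single c 1 ∈ pieceSet (d i) (Z i) := by
    obtain ⟨h1, h2⟩ := hwi
    constructor
    · exact h1.trans le_self_add
    · intro c' hc'
      have hne : c' ≠ c := fun h => hc' (h ▸ hc)
      simp [Finsupp.single_apply, hne.symm, h2 c' hc']
  have : monomial (w + Finsupp.single c 1) (1 : K) ∈ monomialCompl I := by
    rw [← hd.2]
    refine le_iSup (fun i => stanleySpace K (d i) (Z i)) i ?_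
    show _ ∈ stanleySpace K (d i) (Z i)
    rw [stanleySpace_eq_suppSet, monomial_mem_suppSet]
    exact hmem2
  exact monomial_mem_monomialCompl.mp this

/-- Key lemma: if there is a monomial `w ∉ I` with `x_c · w ∈ I` for all `c`, then
`sdepth(S/I) = 0`. -/
lemma sdepthQuot_eq_zero {I : Ideal (MvPolynomial (Fin n) K)} {w : Fin n →₀ ℕ}
    (hw : monomial w (1 : K) ∉ I)
    (hstep : ∀ c : Fin n, monomial (w + Finsupp.single c 1) (1 : K) ∈ I) :
    sdepthQuot I = 0 := by
  rw [sdepthQuot]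
  apply Nat.le_zero.mp
  apply sdepth_le
  intro k r d Z hd hk
  by_contra hk1
  push_neg at hk1
  obtain ⟨i, hwi⟩ := exists_piece hd hw
  obtain ⟨c, hc⟩ := Finset.card_pos.mp (lt_of_lt_of_le hk1 (hk i))
  exact step_notin hd hwi hc (hstep c)

/-- `sdepth(S/I) ≤ 1` for an ideal with two distinct minimal monomial generators
(three variables). -/
lemma sdepthQuot_le_one {I : Ideal (MvPolynomial (Fin 3) K)}
    (hex : ∃ g h : Fin 3 →₀ ℕ, g ∈ minGens I ∧ h ∈ minGens I ∧ g ≠ h) :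
    sdepthQuot I ≤ 1 := by
  classical
  set S : Set ℕ := {μ | ∃ g h : Fin 3 →₀ ℕ, g ∈ minGens I ∧ h ∈ minGens I ∧ g ≠ h ∧
    (∑ c, max (g c) (h c)) = μ} with hS
  have hSne : S.Nonempty := by
    obtain ⟨g, h, hg, hh, hne⟩ := hex
    exact ⟨_, g, h, hg, hh, hne, rfl⟩
  obtain ⟨g, h, hg, hh, hne, hsum⟩ := Nat.sInf_mem hSne
  -- incomparability
  have hgh : ¬ g ≤ h := fun hle => hne (hh.2 g hle hg.1)
  have hhg : ¬ h ≤ g := fun hle => hne.symm (hg.2 h hle hh.1)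
  rw [Finsupp.le_def] at hgh hhg
  push_neg at hgh hhg
  obtain ⟨s, hs⟩ := hgh  -- h s < g s
  obtain ⟨t, ht⟩ := hhg  -- g t < h t
  have hst : s ≠ t := by
    intro hE; rw [hE] at hs; omega
  set l : Fin 3 →₀ ℕ := Finsupp.zipWith max (max_self 0) g h with hl
  have hlc : ∀ c, l c = max (g c) (h c) := fun c => Finsupp.zipWith_apply
  set w0 : Fin 3 →₀ ℕ := l - Finsupp.single s 1 - Finsupp.single t 1 with hw0def
  have hw0c : ∀ c, w0 c = l c - (if s = c then 1 else 0) - (if t = c then 1 else 0) := by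
    intro c
    simp [hw0def, Finsupp.tsub_apply, Finsupp.single_apply]
  have hw0s : w0 s = g s - 1 := by
    rw [hw0c s, hlc s, if_pos rfl, if_neg (fun hE => hst hE.symm)]
    omega
  have hw0t : w0 t = h t - 1 := by
    rw [hw0c t, hlc t, if_neg hst, if_pos rfl]
    omega
  have hw0o : ∀ c, s ≠ c → t ≠ c → w0 c = l c := by
    intro c h1 h2
    rw [hw0c c, if_neg h1, if_neg h2]
    omega
  have hw0le : ∀ c, w0 c ≤ l c := by
    intro c; rw [hw0c c]; omega
  -- w0 is not in I
  have hw0I : monomial w0 (1 : K) ∉ I := by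
    intro hmem
    obtain ⟨f, hf, hfle⟩ := exists_minGen_le hmem
    have hfle' := Finsupp.le_def.mp hfle
    have hfs : f s < g s := by
      have := hfle' s; rw [hw0s] at this; omega
    have hfg : f ≠ g := by
      intro hE; rw [hE] at hfs; omega
    have hlt : (∑ c, max (f c) (g c)) < sInf S := by
      rw [← hsum]
      apply Finset.sum_lt_sum
      · intro c _
        have h1 := hfle' c
        have h2 := hw0le c
        have h3 := hlc c
        omega
      · refine ⟨t, Finset.mem_univ t, ?_⟩
        have h1 := hfle' t
        have h2 := hw0t
        have h3 := hlc t
        omega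
    have hmemS : (∑ c, max (f c) (g c)) ∈ S := ⟨f, g, hf, hg, hfg, rfl⟩
    exact absurd (Nat.sInf_le hmemS) (by omega)
  -- now bound the Stanley depth
  apply sdepth_le
  intro k r d Z hd hk
  by_contra hk2
  push_neg at hk2  -- 2 ≤ k
  obtain ⟨i, hwi⟩ := exists_piece hd hw0I
  have hsZ : s ∉ Z i := by
    intro hsZ
    apply step_notin hd hwi hsZ
    apply monomial_mem_of_le _ hg.1
    rw [Finsupp.le_def]
    intro c
    simp only [Finsupp.add_apply, Finsupp.single_apply]
    rcases eq_or_ne s c with rfl | h1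
    · rw [hw0s, if_pos rfl]; omega
    rcases eq_or_ne t c with rfl | h2
    · rw [hw0t, if_neg h1]; omega
    · rw [hw0o c h1 h2, if_neg h1]; have := hlc c; omega
  have htZ : t ∉ Z i := by
    intro htZ
    apply step_notin hd hwi htZ
    apply monomial_mem_of_le _ hh.1
    rw [Finsupp.le_def]
    intro c
    simp only [Finsupp.add_apply, Finsupp.single_apply]
    rcases eq_or_ne s c with rfl | h1
    · rw [hw0s, if_neg (fun hE => hst hE.symm)]; omega
    rcases eq_or_ne t c with rfl | h2
    · rw [hw0t, if_pos rfl]; omega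
    · rw [hw0o c h1 h2, if_neg h2]; have := hlc c; omega
  have hsub : Z i ⊆ Finset.univ \ {s, t} := by
    intro c hc
    simp only [Finset.mem_sdiff, Finset.mem_univ, true_and, Finset.mem_insert,
      Finset.mem_singleton]
    rintro (rfl | rfl)
    · exact hsZ hc
    · exact htZ hc
  have hcard : (Finset.univ \ ({s, t} : Finset (Fin 3))).card = 1 := by
    rw [Finset.card_sdiff_of_subset (Finset.subset_univ _)]
    rw [Finset.card_insert_of_notMem (by simpa using hst), Finset.card_singleton]
    simp
  have := (hk i).trans (Finset.card_le_card hsub)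
  omega

end SD
namespace SD
open MvPolynomial

variable {K : Type*} [Field K] {n : ℕ}

lemma monomial_mul_X (w : Fin n →₀ ℕ) (c : Fin n) :
    monomial w (1 : K) * X c = monomial (w + Finsupp.single c 1) (1 : K) := by
  rw [show (X c : MvPolynomial (Fin n) K) = monomial (Finsupp.single c 1) 1 from rfl,
    MvPolynomial.monomial_mul, one_mul]

/-- If `I = (I : m)` then monomials satisfy the colon step property. -/
lemma colon_step {I : Ideal (MvPolynomial (Fin n) K)}
    (hcol : I = Submodule.colon I (irrelevantIdeal K (Fin n))) :
    ∀ w : Fin n →₀ ℕ, (∀ c, monomial (w + Finsupp.single c 1) (1 : K) ∈ I) →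
      monomial w (1 : K) ∈ I := by
  intro w hw
  rw [hcol]
  rw [Submodule.mem_colon]
  intro p hp
  rw [irrelevantIdeal] at hp
  induction hp using Submodule.span_induction with
  | mem x hx =>
    obtain ⟨c, rfl⟩ := hx
    rw [smul_eq_mul, monomial_mul_X]
    exact hw c
  | zero => simpa using I.zero_mem
  | add x y _ _ hx hy => rw [smul_add]; exact I.add_mem hx hy
  | smul a x _ hx =>
    rw [smul_comm]
    exact Submodule.smul_mem _ _ hx

/-- Every monomial outside a "saturated" monomial set has a free ray. -/
lemma free_ray {I : Ideal (MvPolynomial (Fin n) K)} (hn : 0 < n)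
    (hcol : ∀ w : Fin n →₀ ℕ, (∀ c, monomial (w + Finsupp.single c 1) (1 : K) ∈ I) →
      monomial w (1 : K) ∈ I)
    {w : Fin n →₀ ℕ} (hw : monomial w (1 : K) ∉ I) :
    ∃ c, ∀ t : ℕ, monomial (w + Finsupp.single c t) (1 : K) ∉ I := by
  by_contra hc
  push_neg at hc
  choose tf htf using hc
  apply hw
  clear hw
  -- strong induction on the total budget
  suffices H : ∀ (N : ℕ) (w : Fin n →₀ ℕ) (tf : Fin n → ℕ), (∑ c, tf c) = N →
      (∀ c, monomial (w + Finsupp.single c (tf c)) (1 : K) ∈ I) →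
      monomial w (1 : K) ∈ I by
    exact H _ w tf rfl htf
  clear htf tf w
  intro N
  induction N using Nat.strong_induction_on with
  | _ N ih =>
    intro w tf hsum htf
    by_cases h0 : ∃ c, tf c = 0
    · obtain ⟨c, hc0⟩ := h0
      have := htf c
      rw [hc0] at this
      simpa using this
    · push_neg at h0
      have hN : 0 < N := by
        obtain ⟨c0⟩ : Nonempty (Fin n) := ⟨⟨0, hn⟩⟩
        have := Nat.pos_of_ne_zero (h0 c0)
        have hle : tf c0 ≤ ∑ c, tf c := Finset.single_le_sum (fun _ _ => Nat.zero_le _)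
          (Finset.mem_univ c0)
        omega
      apply hcol
      intro c
      have hc1 : 1 ≤ tf c := Nat.pos_of_ne_zero (h0 c)
      set tf' : Fin n → ℕ := Function.update tf c (tf c - 1) with htf'
      refine ih (N - 1) (by omega) _ tf' ?_ ?_
      · have h1 : ∑ d, tf' d = (tf c - 1) + ∑ d ∈ Finset.univ.erase c, tf d := by
          rw [htf', Finset.sum_update_of_mem (Finset.mem_univ c),
            Finset.sdiff_singleton_eq_erase]
        have h2 : ∑ d, tf d = tf c + ∑ d ∈ Finset.univ.erase c, tf d :=
          (Finset.add_sum_erase _ tf (Finset.mem_univ c)).symm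
        omega
      · intro d
        rcases eq_or_ne d c with rfl | hdc
        · have heq : w + Finsupp.single d 1 + Finsupp.single d (tf' d) =
              w + Finsupp.single d (tf d) := by
            rw [htf', Function.update_self]
            rw [add_assoc, ← Finsupp.single_add]
            congr 2
            omega
          rw [heq]
          exact htf d
        · apply monomial_mem_of_le _ (htf d)
          rw [htf', Function.update_of_ne hdc]
          rw [Finsupp.le_def]
          intro e
          simp only [Finsupp.add_apply, Finsupp.single_apply]
          split <;> split <;> omega

lemma monomial_mem_pow_irrelevant {k : ℕ} {f : Fin n →₀ ℕ} (hf : (∑ c, f c) = k) :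
    monomial f (1 : K) ∈ (irrelevantIdeal K (Fin n)) ^ k := by
  induction k generalizing f with
  | zero =>
    rw [pow_zero, Ideal.one_eq_top]
    trivial
  | succ k ih =>
    have : ∃ c, 0 < f c := by
      by_contra hc
      push_neg at hc
      have : (∑ c, f c) = 0 := Finset.sum_eq_zero (fun c _ => Nat.le_zero.mp (hc c))
      omega
    obtain ⟨c, hc⟩ := this
    set f' : Fin n →₀ ℕ := f - Finsupp.single c 1 with hf'
    have hf'app : ∀ d, f' d = if c = d then f c - 1 else f d := by
      intro d
      rw [hf']
      simp only [Finsupp.tsub_apply, Finsupp.single_apply]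
      split
      · next h => subst h; rfl
      · rfl
    have heq : f = f' + Finsupp.single c 1 := by
      ext e
      simp only [Finsupp.add_apply, Finsupp.single_apply, hf'app e]
      split
      · next h => subst h; omega
      · omega
    have hsum : (∑ d, f' d) = k := by
      have e1 : ∑ d, f' d = f' c + ∑ d ∈ Finset.univ.erase c, f' d :=
        (Finset.add_sum_erase _ f' (Finset.mem_univ c)).symm
      have e2 : ∑ d, f d = f c + ∑ d ∈ Finset.univ.erase c, f d :=
        (Finset.add_sum_erase _ f (Finset.mem_univ c)).symm
      have e3 : ∑ d ∈ Finset.univ.erase c, f' d = ∑ d ∈ Finset.univ.erase c, f d := by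
        refine Finset.sum_congr rfl (fun d hd => ?_)
        rw [hf'app d, if_neg (Finset.ne_of_mem_erase hd).symm]
      have e4 : f' c = f c - 1 := by rw [hf'app c, if_pos rfl]
      omega
    rw [heq, pow_succ]
    have hmul : monomial (f' + Finsupp.single c 1) (1 : K) =
        monomial f' (1:K) * X c := (monomial_mul_X _ c).symm
    rw [hmul]
    exact Ideal.mul_mem_mul (ih hsum) (Ideal.subset_span ⟨c, rfl⟩)

/-- Monomials of elements of a monomial ideal belong to the ideal. -/
lemma monomial_mem_of_support {I : Ideal (MvPolynomial (Fin n) K)} (hI : IsMonomialIdeal I)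
    {q : MvPolynomial (Fin n) K} (hq : q ∈ I) {v : Fin n →₀ ℕ} (hv : v ∈ q.support) :
    monomial v (1 : K) ∈ I := by
  have hset : {p : MvPolynomial (Fin n) K | ∃ d : Fin n →₀ ℕ, monomial d (1 : K) ∈ I ∧
      p = monomial d (1 : K)} = (fun s => monomial s (1:K)) '' {d | monomial d (1:K) ∈ I} := by
    ext p
    constructor
    · rintro ⟨d, hd, rfl⟩; exact ⟨d, hd, rfl⟩
    · rintro ⟨d, hd, rfl⟩; exact ⟨d, hd, rfl⟩
  rw [IsMonomialIdeal, hset] at hI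
  rw [hI] at hq
  rw [MvPolynomial.mem_ideal_span_monomial_image] at hq
  obtain ⟨s, hs, hsle⟩ := hq v hv
  exact monomial_mem_of_le hsle hs

/-- If not all monomials of `p` are in `I`, `p ∉ I`; conversely used: some monomial避 -/
lemma exists_monomial_not_mem {I : Ideal (MvPolynomial (Fin n) K)}
    {p : MvPolynomial (Fin n) K} (hp : p ∉ I) :
    ∃ d ∈ p.support, monomial d (1 : K) ∉ I := by
  by_contra hc
  push_neg at hc
  apply hp
  rw [← MvPolynomial.support_sum_monomial_coeff p]
  refine Submodule.sum_mem _ (fun v hv => ?_)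
  have : (monomial v) (coeff v p) = C (coeff v p) * monomial v (1 : K) := by
    rw [MvPolynomial.C_mul_monomial, mul_one]
  rw [this]
  exact Ideal.mul_mem_left _ _ (hc v hv)

end SD
namespace SD
open MvPolynomial

variable {K : Type*} [Field K] {n : ℕ}

lemma sum_sub_single {g : Fin n →₀ ℕ} {c : Fin n} (hc : 0 < g c) :
    (∑ d, ((g - Finsupp.single c 1 : Fin n →₀ ℕ)) d) = (∑ d, g d) - 1 := by
  set g' : Fin n →₀ ℕ := g - Finsupp.single c 1 with hg'
  have hg'app : ∀ d, g' d = if c = d then g c - 1 else g d := by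
    intro d
    rw [hg']
    simp only [Finsupp.tsub_apply, Finsupp.single_apply]
    split
    · next h => subst h; rfl
    · rfl
  have e1 : ∑ d, g' d = g' c + ∑ d ∈ Finset.univ.erase c, g' d :=
    (Finset.add_sum_erase _ g' (Finset.mem_univ c)).symm
  have e2 : ∑ d, g d = g c + ∑ d ∈ Finset.univ.erase c, g d :=
    (Finset.add_sum_erase _ g (Finset.mem_univ c)).symm
  have e3 : ∑ d ∈ Finset.univ.erase c, g' d = ∑ d ∈ Finset.univ.erase c, g d := by
    refine Finset.sum_congr rfl (fun d hd => ?_)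
    rw [hg'app d, if_neg (Finset.ne_of_mem_erase hd).symm]
  have e4 : g' c = g c - 1 := by rw [hg'app c, if_pos rfl]
  omega

lemma exists_le_sum_eq {k : ℕ} : ∀ N (g : Fin n →₀ ℕ), (∑ c, g c) = N → k ≤ N →
    ∃ f : Fin n →₀ ℕ, f ≤ g ∧ (∑ c, f c) = k := by
  intro N
  induction N with
  | zero => intro g hg hk; exact ⟨g, le_rfl, by omega⟩
  | succ N ih =>
    intro g hg hk
    rcases Nat.lt_or_ge k (N+1) with hlt | hge
    · have : ∃ c, 0 < g c := by
        by_contra hcon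
        push_neg at hcon
        have : (∑ c, g c) = 0 := Finset.sum_eq_zero (fun c _ => Nat.le_zero.mp (hcon c))
        omega
      obtain ⟨c, hc⟩ := this
      have hsub := sum_sub_single (g := g) (c := c) hc
      have hgoal : (∑ d, ((g - Finsupp.single c 1 : Fin n →₀ ℕ)) d) = N := by
        rw [hsub, hg]
        omega
      obtain ⟨f, hf1, hf2⟩ := ih ((g - Finsupp.single c 1 : Fin n →₀ ℕ)) hgoal (by omega)
      exact ⟨f, hf1.trans tsub_le_self, hf2⟩
    · exact ⟨g, le_rfl, by omega⟩

lemma sum_sub_of_le {d e : Fin n →₀ ℕ} (h : d ≤ e) :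
    (∑ c, ((e - d : Fin n →₀ ℕ)) c) = (∑ c, e c) - (∑ c, d c) := by
  have h' := Finsupp.le_def.mp h
  have : (∑ c, (e - d) c) + (∑ c, d c) = ∑ c, e c := by
    rw [← Finset.sum_add_distrib]
    refine Finset.sum_congr rfl (fun c _ => ?_)
    rw [Finsupp.tsub_apply]
    have := h' c
    omega
  omega

/-- From `p ∈ (I : m^k) \ I` extract a "corner" monomial. -/
lemma exists_corner_aux {I : Ideal (MvPolynomial (Fin n) K)} (hI : IsMonomialIdeal I)
    {k : ℕ} {p : MvPolynomial (Fin n) K} (hpc : p ∈ Submodule.colon I ((irrelevantIdeal K (Fin n) ^ k : Ideal (MvPolynomial (Fin n) K)) : Set (MvPolynomial (Fin n) K)))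
    (hpI : p ∉ I) :
    ∃ w : Fin n →₀ ℕ, monomial w (1 : K) ∉ I ∧
      ∀ c, monomial (w + Finsupp.single c 1) (1 : K) ∈ I := by
  obtain ⟨d, hd, hdI⟩ := exists_monomial_not_mem hpI
  have hD : ∀ f : Fin n →₀ ℕ, (∑ c, f c) = k → monomial (d + f) (1 : K) ∈ I := by
    intro f hf
    have hmul : p * monomial f (1:K) ∈ I := by
      have := Submodule.mem_colon.mp hpc (monomial f (1:K)) (monomial_mem_pow_irrelevant hf)
      rwa [smul_eq_mul] at this
    apply monomial_mem_of_support hI hmul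
    rw [MvPolynomial.mem_support_iff]
    rw [MvPolynomial.coeff_mul_monomial]
    simpa [MvPolynomial.mem_support_iff] using hd
  -- pick a maximal-weight monomial ≥ d outside I
  set B : Set ℕ := {ν | ∃ e : Fin n →₀ ℕ, d ≤ e ∧ monomial e (1:K) ∉ I ∧ (∑ c, e c) = ν}
    with hB
  have hBne : B.Nonempty := ⟨∑ c, d c, d, le_rfl, hdI, rfl⟩
  have hBbd : BddAbove B := by
    refine ⟨(∑ c, d c) + k, ?_⟩
    rintro ν ⟨e, hde, heI, rfl⟩
    by_contra hgt
    push_neg at hgt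
    have hsum := sum_sub_of_le hde
    obtain ⟨f, hfle, hfsum⟩ := exists_le_sum_eq (k := k) _ (e - d) rfl (by omega)
    have : d + f ≤ e := by
      calc d + f ≤ d + (e - d) := add_le_add le_rfl hfle
        _ = e := add_tsub_cancel_of_le hde
    exact heI (monomial_mem_of_le this (hD f hfsum))
  obtain ⟨w, hdw, hwI, hwsum⟩ := Nat.sSup_mem hBne hBbd
  refine ⟨w, hwI, fun c => ?_⟩
  by_contra hcon
  have hmem : (∑ c', ((w + Finsupp.single c 1 : Fin n →₀ ℕ)) c') ∈ B :=
    ⟨w + Finsupp.single c 1, hdw.trans le_self_add, hcon, rfl⟩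
  have hsingle : (∑ c', ((Finsupp.single c 1 : Fin n →₀ ℕ)) c') = 1 := by
    simp [Finsupp.single_apply]
  have hgt : (∑ c', ((w + Finsupp.single c 1 : Fin n →₀ ℕ)) c') = sSup B + 1 := by
    simp only [Finsupp.add_apply]
    rw [Finset.sum_add_distrib, hwsum, hsingle]
  have := le_csSup hBbd hmem
  omega

end SD
namespace SD
open MvPolynomial

variable {K : Type*} [Field K] {n : ℕ}

lemma le_colon (I : Ideal (MvPolynomial (Fin n) K)) (N : Submodule (MvPolynomial (Fin n) K) (MvPolynomial (Fin n) K)) :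
    I ≤ Submodule.colon I N := by
  intro x hx
  rw [Submodule.mem_colon]
  intro p _
  rw [smul_eq_mul]
  exact Ideal.mul_mem_right _ _ hx

lemma le_satIdeal (I : Ideal (MvPolynomial (Fin n) K)) : I ≤ satIdeal I := by
  refine le_trans (le_colon I (irrelevantIdeal K (Fin n) ^ 0)) ?_
  exact le_iSup (fun k : ℕ => Submodule.colon I ((irrelevantIdeal K (Fin n) ^ k : Ideal (MvPolynomial (Fin n) K)) : Set (MvPolynomial (Fin n) K))) 0

/-- A corner monomial exists whenever `I ≠ I^sat`. -/
lemma exists_corner_of_ne_sat {I : Ideal (MvPolynomial (Fin n) K)} (hI : IsMonomialIdeal I)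
    (hne : I ≠ satIdeal I) :
    ∃ w : Fin n →₀ ℕ, monomial w (1 : K) ∉ I ∧
      ∀ c, monomial (w + Finsupp.single c 1) (1 : K) ∈ I := by
  obtain ⟨p, hp, hpI⟩ := SetLike.exists_of_lt (lt_of_le_of_ne (le_satIdeal I) hne)
  have hmono : Monotone (fun k : ℕ => Submodule.colon I ((irrelevantIdeal K (Fin n) ^ k : Ideal (MvPolynomial (Fin n) K)) : Set (MvPolynomial (Fin n) K))) := by
    intro k k' hk
    exact Submodule.colon_mono le_rfl (Ideal.pow_le_pow_right hk)
  obtain ⟨k, hk⟩ := (Submodule.mem_iSup_of_directed _ hmono.directed_le).mp hp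
  exact exists_corner_aux hI hk hpI

/-- A corner monomial exists whenever `I ≠ (I : m)`. -/
lemma exists_corner_of_ne_colon {I : Ideal (MvPolynomial (Fin n) K)} (hI : IsMonomialIdeal I)
    (hne : I ≠ Submodule.colon I (irrelevantIdeal K (Fin n))) :
    ∃ w : Fin n →₀ ℕ, monomial w (1 : K) ∉ I ∧
      ∀ c, monomial (w + Finsupp.single c 1) (1 : K) ∈ I := by
  obtain ⟨p, hp, hpI⟩ := SetLike.exists_of_lt
    (lt_of_le_of_ne (le_colon I (irrelevantIdeal K (Fin n))) hne)
  have hp1 : p ∈ Submodule.colon I ((irrelevantIdeal K (Fin n) ^ 1 : Ideal (MvPolynomial (Fin n) K)) : Set (MvPolynomial (Fin n) K)) := by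
    rwa [pow_one]
  exact exists_corner_aux hI hp1 hpI

/-- The triple construction: from a corner monomial, a 3-element subset of generators
whose span has Stanley depth zero. -/
lemma exists_triple {I : Ideal (MvPolynomial (Fin 3) K)} {m : ℕ} (hm : 3 < m)
    {u : Fin m → (Fin 3 →₀ ℕ)} (hgen : minGens I = Set.range u)
    {w : Fin 3 →₀ ℕ} (hw : monomial w (1 : K) ∉ I)
    (hstep : ∀ c, monomial (w + Finsupp.single c 1) (1 : K) ∈ I) :
    ∃ T : Finset (Fin m), T.card = 3 ∧
      sdepthQuot (Ideal.span ((fun i => monomial (u i) (1 : K)) '' ↑T)) = 0 := by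
  classical
  have hidx : ∀ c : Fin 3, ∃ i : Fin m, u i ≤ w + Finsupp.single c 1 := by
    intro c
    obtain ⟨g, hg, hgle⟩ := exists_minGen_le (hstep c)
    rw [hgen] at hg
    obtain ⟨i, rfl⟩ := hg
    exact ⟨i, hgle⟩
  choose idx hidxle using hidx
  set S : Finset (Fin m) := Finset.image idx Finset.univ with hS
  have hScard : S.card ≤ 3 := le_trans Finset.card_image_le (by simp)
  obtain ⟨T, hST, hTcard⟩ := Finset.exists_superset_card_eq hScard (by simp; omega)
  refine ⟨T, hTcard, ?_⟩
  set J : Ideal (MvPolynomial (Fin 3) K) :=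
    Ideal.span ((fun i => monomial (u i) (1 : K)) '' ↑T) with hJ
  have hJI : J ≤ I := by
    rw [hJ, Ideal.span_le]
    rintro q ⟨i, _, rfl⟩
    have : u i ∈ minGens I := hgen ▸ ⟨i, rfl⟩
    exact this.1
  apply sdepthQuot_eq_zero (w := w)
  · exact fun h => hw (hJI h)
  · intro c
    have hin : monomial (u (idx c)) (1 : K) ∈ J := by
      apply Ideal.subset_span
      exact ⟨idx c, hST (Finset.mem_image_of_mem idx (Finset.mem_univ c)), rfl⟩
    exact monomial_mem_of_le (hidxle c) hin

end SD
namespace SD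

/-! ### 2D staircase decompositions -/

/-- Up-set of `ℕ × ℕ` generated by a finite set. -/
def UpS (G : Finset (ℕ × ℕ)) : Set (ℕ × ℕ) := {p | ∃ g ∈ G, g.1 ≤ p.1 ∧ g.2 ≤ p.2}

/-- the second coordinates of generators applicable at column `x`. -/
def filt (G : Finset (ℕ × ℕ)) (x : ℕ) : Finset ℕ :=
  (G.filter (fun g => g.1 ≤ x)).image Prod.snd

lemma mem_UpS_iff {G : Finset (ℕ × ℕ)} {x y : ℕ} :
    (x, y) ∈ UpS G ↔ ∃ hne : (filt G x).Nonempty, (filt G x).min' hne ≤ y := by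
  constructor
  · rintro ⟨g, hg, h1, h2⟩
    have hmem : g.2 ∈ filt G x := Finset.mem_image_of_mem _ (Finset.mem_filter.mpr ⟨hg, h1⟩)
    exact ⟨⟨g.2, hmem⟩, le_trans (Finset.min'_le _ _ hmem) h2⟩
  · rintro ⟨hne, hle⟩
    obtain ⟨g, hg, hg2⟩ := Finset.mem_image.mp (Finset.min'_mem _ hne)
    obtain ⟨hgG, hg1⟩ := Finset.mem_filter.mp hg
    exact ⟨g, hgG, hg1, by omega⟩

lemma UpS_union {G H : Finset (ℕ × ℕ)} : UpS (G ∪ H) = UpS G ∪ UpS H := by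
  ext p
  constructor
  · rintro ⟨g, hg, h⟩
    rcases Finset.mem_union.mp hg with h' | h'
    · exact Or.inl ⟨g, h', h⟩
    · exact Or.inr ⟨g, h', h⟩
  · rintro (⟨g, hg, h⟩ | ⟨g, hg, h⟩)
    · exact ⟨g, Finset.mem_union_left _ hg, h⟩
    · exact ⟨g, Finset.mem_union_right _ hg, h⟩

lemma filt_mono {G : Finset (ℕ × ℕ)} {x x' : ℕ} (h : x ≤ x') : filt G x ⊆ filt G x' := by
  intro b hb
  obtain ⟨g, hg, hg2⟩ := Finset.mem_image.mp hb
  obtain ⟨hgG, hg1⟩ := Finset.mem_filter.mp hg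
  exact Finset.mem_image.mpr ⟨g, Finset.mem_filter.mpr ⟨hgG, by omega⟩, hg2⟩

lemma filt_stab {G : Finset (ℕ × ℕ)} {x : ℕ} (h : G.sup Prod.fst ≤ x) :
    filt G x = G.image Prod.snd := by
  unfold filt
  congr 1
  apply Finset.filter_true_of_mem
  intro g hg
  exact le_trans (Finset.le_sup hg) h

/-- difference of two 2D up-sets: `Up H \ Up G`. -/
def MB (G H : Finset (ℕ × ℕ)) : Set (ℕ × ℕ) := UpS H \ UpS G

/-- a 2D "Stanley piece": base `(a,b)`, flags tell whether coordinates are free. -/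
structure Pc2 where
  a : ℕ
  b : ℕ
  fa : Bool
  fb : Bool

def Pc2.set (P : Pc2) : Set (ℕ × ℕ) :=
  {p | (if P.fa then P.a ≤ p.1 else p.1 = P.a) ∧ (if P.fb then P.b ≤ p.2 else p.2 = P.b)}

lemma Pc2.disj_fst {P Q : Pc2} (hP : P.fa = false) (hQ : Q.fa = false) (h : P.a ≠ Q.a) :
    Disjoint P.set Q.set := by
  rw [Set.disjoint_left]
  rintro p ⟨h1, _⟩ ⟨h2, _⟩
  rw [hP] at h1; rw [hQ] at h2
  simp only [Bool.false_eq_true, if_false] at h1 h2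
  omega

lemma Pc2.disj_snd {P Q : Pc2} (hP : P.fb = false) (hQ : Q.fb = false) (h : P.b ≠ Q.b) :
    Disjoint P.set Q.set := by
  rw [Set.disjoint_left]
  rintro p ⟨_, h1⟩ ⟨_, h2⟩
  rw [hP] at h1; rw [hQ] at h2
  simp only [Bool.false_eq_true, if_false] at h1 h2
  omega

lemma Pc2.disj_fst_lt {P Q : Pc2} (hP : P.fa = false) (hQ : Q.fa = true) (h : P.a < Q.a) :
    Disjoint P.set Q.set := by
  rw [Set.disjoint_left]
  rintro p ⟨h1, _⟩ ⟨h2, _⟩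
  rw [hP] at h1; rw [hQ] at h2
  simp only [Bool.false_eq_true, if_false, if_true] at h1 h2
  omega

open Classical in
/-- pieces for the (finite) column `x`. -/
noncomputable def colPieces (G H : Finset (ℕ × ℕ)) (x : ℕ) : List Pc2 :=
  if hH : (filt H x).Nonempty then
    if hG : (filt G x).Nonempty then
      (List.range ((filt G x).min' hG - (filt H x).min' hH)).map
        (fun t => ⟨x, (filt H x).min' hH + t, false, false⟩)
    else [⟨x, (filt H x).min' hH, false, true⟩]
  else []

open Classical in
/-- pieces for the columns `x ≥ X₀` (stable region). -/
noncomputable def tailPieces (G H : Finset (ℕ × ℕ)) (X₀ : ℕ) : List Pc2 :=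
  if hH : (filt H X₀).Nonempty then
    if hG : (filt G X₀).Nonempty then
      (List.range ((filt G X₀).min' hG - (filt H X₀).min' hH)).map
        (fun t => ⟨X₀, (filt H X₀).min' hH + t, true, false⟩)
    else [⟨X₀, (filt H X₀).min' hH, true, true⟩]
  else []

noncomputable def lemBList (G H : Finset (ℕ × ℕ)) : List Pc2 :=
  ((List.range ((G ∪ H).sup Prod.fst)).flatMap (colPieces G H)) ++
    tailPieces G H ((G ∪ H).sup Prod.fst)

lemma colPieces_shape {G H : Finset (ℕ × ℕ)} {x : ℕ} {P : Pc2} (hP : P ∈ colPieces G H x) :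
    P.fa = false ∧ P.a = x := by
  unfold colPieces at hP
  split at hP
  · split at hP
    · obtain ⟨t, _, rfl⟩ := List.mem_map.mp hP
      exact ⟨rfl, rfl⟩
    · rw [List.mem_singleton] at hP
      subst hP
      exact ⟨rfl, rfl⟩
  · simp at hP

lemma tailPieces_shape {G H : Finset (ℕ × ℕ)} {X₀ : ℕ} {P : Pc2}
    (hP : P ∈ tailPieces G H X₀) : P.fa = true ∧ P.a = X₀ := by
  unfold tailPieces at hP
  split at hP
  · split at hP
    · obtain ⟨t, _, rfl⟩ := List.mem_map.mp hP
      exact ⟨rfl, rfl⟩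
    · rw [List.mem_singleton] at hP
      subst hP
      exact ⟨rfl, rfl⟩
  · simp at hP

lemma colPieces_pairwise (G H : Finset (ℕ × ℕ)) (x : ℕ) :
    (colPieces G H x).Pairwise (fun P Q => Disjoint P.set Q.set) := by
  unfold colPieces
  split
  · split
    · rw [List.pairwise_map]
      apply List.Pairwise.imp ?_ List.pairwise_lt_range
      intro t t' h
      exact Pc2.disj_snd rfl rfl (by dsimp only; omega)
    · simp
  · simp

lemma tailPieces_pairwise (G H : Finset (ℕ × ℕ)) (X₀ : ℕ) :
    (tailPieces G H X₀).Pairwise (fun P Q => Disjoint P.set Q.set) := by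
  unfold tailPieces
  split
  · split
    · rw [List.pairwise_map]
      apply List.Pairwise.imp ?_ List.pairwise_lt_range
      intro t t' h
      exact Pc2.disj_snd rfl rfl (by dsimp only; omega)
    · simp
  · simp

lemma lemBList_pairwise (G H : Finset (ℕ × ℕ)) :
    (lemBList G H).Pairwise (fun P Q => Disjoint P.set Q.set) := by
  unfold lemBList
  rw [List.pairwise_append]
  refine ⟨?_, tailPieces_pairwise G H _, ?_⟩
  · rw [List.flatMap_def, List.pairwise_flatten]
    constructor
    · intro l hl
      obtain ⟨x, _, rfl⟩ := List.mem_map.mp hl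
      exact colPieces_pairwise G H x
    · rw [List.pairwise_map]
      apply List.Pairwise.imp ?_ List.pairwise_lt_range
      intro x x' hxx P hP Q hQ
      obtain ⟨hPf, hPa⟩ := colPieces_shape hP
      obtain ⟨hQf, hQa⟩ := colPieces_shape hQ
      exact Pc2.disj_fst hPf hQf (by omega)
  · intro P hP Q hQ
    obtain ⟨x, hx, hPx⟩ := List.mem_flatMap.mp hP
    obtain ⟨hPf, hPa⟩ := colPieces_shape hPx
    obtain ⟨hQf, hQa⟩ := tailPieces_shape hQ
    rw [List.mem_range] at hx
    exact Pc2.disj_fst_lt hPf hQf (by omega)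

/-- Pieces are contained in `MB G H`. -/
lemma lemBList_subset (G H : Finset (ℕ × ℕ)) {P : Pc2} (hP : P ∈ lemBList G H) :
    P.set ⊆ MB G H := by
  unfold lemBList at hP
  set X₀ := (G ∪ H).sup Prod.fst with hX₀
  have hGsup : G.sup Prod.fst ≤ X₀ := Finset.sup_mono Finset.subset_union_left
  have hHsup : H.sup Prod.fst ≤ X₀ := Finset.sup_mono Finset.subset_union_right
  rcases List.mem_append.mp hP with hP | hP
  · -- column piece at some x
    obtain ⟨x, _, hPx⟩ := List.mem_flatMap.mp hP
    unfold colPieces at hPx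
    split at hPx
    case isTrue hH =>
      split at hPx
      case isTrue hG =>
        obtain ⟨t, ht, rfl⟩ := List.mem_map.mp hPx
        rw [List.mem_range] at ht
        rintro ⟨px, py⟩ ⟨h1, h2⟩
        simp only [Bool.false_eq_true, if_false] at h1 h2
        subst h1; subst h2
        constructor
        · exact mem_UpS_iff.mpr ⟨hH, by omega⟩
        · intro hmem
          obtain ⟨hne, hle⟩ := mem_UpS_iff.mp hmem
          have : (filt G px).min' hne = (filt G px).min' hG := rfl
          omega
      case isFalse hG =>
        rw [List.mem_singleton] at hPx
        subst hPx
        rintro ⟨px, py⟩ ⟨h1, h2⟩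
        simp only [Bool.false_eq_true, if_false, if_true] at h1 h2
        subst h1
        constructor
        · exact mem_UpS_iff.mpr ⟨by assumption, by omega⟩
        · intro hmem
          obtain ⟨hne, _⟩ := mem_UpS_iff.mp hmem
          exact hG hne
    case isFalse => simp at hPx
  · -- tail piece
    unfold tailPieces at hP
    split at hP
    case isTrue hH =>
      split at hP
      case isTrue hG =>
        obtain ⟨t, ht, rfl⟩ := List.mem_map.mp hP
        rw [List.mem_range] at ht
        rintro ⟨px, py⟩ ⟨h1, h2⟩
        simp only [Bool.false_eq_true, if_false, if_true] at h1 h2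
        subst h2
        have hfG : filt G px = filt G X₀ := by
          rw [filt_stab (le_trans hGsup h1), filt_stab hGsup]
        have hfH : filt H px = filt H X₀ := by
          rw [filt_stab (le_trans hHsup h1), filt_stab hHsup]
        constructor
        · refine mem_UpS_iff.mpr ⟨hfH ▸ hH, ?_⟩
          have : (filt H px).min' (hfH ▸ hH) = (filt H X₀).min' hH := by
            congr 1
          omega
        · intro hmem
          obtain ⟨hne, hle⟩ := mem_UpS_iff.mp hmem
          have : (filt G px).min' hne = (filt G X₀).min' hG := by
            congr 1
          omega
      case isFalse hG =>
        rw [List.mem_singleton] at hP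
        subst hP
        rintro ⟨px, py⟩ ⟨h1, h2⟩
        simp only [if_true] at h1 h2
        have hfG : filt G px = filt G X₀ := by
          rw [filt_stab (le_trans hGsup h1), filt_stab hGsup]
        have hfH : filt H px = filt H X₀ := by
          rw [filt_stab (le_trans hHsup h1), filt_stab hHsup]
        constructor
        · refine mem_UpS_iff.mpr ⟨hfH ▸ hH, ?_⟩
          have : (filt H px).min' (hfH ▸ hH) = (filt H X₀).min' hH := by
            congr 1
          omega
        · intro hmem
          obtain ⟨hne, _⟩ := mem_UpS_iff.mp hmem
          rw [hfG] at hne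
          exact hG hne
    case isFalse => simp at hP

lemma min'_congr {s t : Finset ℕ} (h : s = t) (hs : s.Nonempty) :
    s.min' hs = t.min' (h ▸ hs) := by subst h; rfl

/-- Every point of `MB G H` is covered by a piece. -/
lemma lemBList_cover (G H : Finset (ℕ × ℕ)) {p : ℕ × ℕ} (hp : p ∈ MB G H) :
    ∃ P ∈ lemBList G H, p ∈ P.set := by
  obtain ⟨px, py⟩ := p
  obtain ⟨hUp, hNot⟩ := hp
  set X₀ := (G ∪ H).sup Prod.fst with hX₀
  have hGsup : G.sup Prod.fst ≤ X₀ := Finset.sup_mono Finset.subset_union_left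
  have hHsup : H.sup Prod.fst ≤ X₀ := Finset.sup_mono Finset.subset_union_right
  obtain ⟨hneH, hleH⟩ := mem_UpS_iff.mp hUp
  rcases Nat.lt_or_ge px X₀ with hx | hx
  · -- column region
    by_cases hG : (filt G px).Nonempty
    · have hyc : py < (filt G px).min' hG := by
        by_contra hcon
        push_neg at hcon
        exact hNot (mem_UpS_iff.mpr ⟨hG, hcon⟩)
      refine ⟨⟨px, (filt H px).min' hneH + (py - (filt H px).min' hneH), false, false⟩,
        ?_, ?_⟩
      · apply List.mem_append_left
        apply List.mem_flatMap.mpr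
        refine ⟨px, List.mem_range.mpr hx, ?_⟩
        unfold colPieces
        rw [dif_pos hneH, dif_pos hG]
        exact List.mem_map.mpr ⟨py - (filt H px).min' hneH,
          List.mem_range.mpr (by omega), rfl⟩
      · exact ⟨by simp, by simp only [Bool.false_eq_true, if_false]; omega⟩
    · refine ⟨⟨px, (filt H px).min' hneH, false, true⟩, ?_, ?_⟩
      · apply List.mem_append_left
        apply List.mem_flatMap.mpr
        refine ⟨px, List.mem_range.mpr hx, ?_⟩
        unfold colPieces
        rw [dif_pos hneH, dif_neg hG]
        exact List.mem_singleton.mpr rfl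
      · exact ⟨by simp, by simp only [if_true]; omega⟩
  · -- tail region
    have hfG : filt G px = filt G X₀ := by
      rw [filt_stab (le_trans hGsup hx), filt_stab hGsup]
    have hfH : filt H px = filt H X₀ := by
      rw [filt_stab (le_trans hHsup hx), filt_stab hHsup]
    have hneH0 : (filt H X₀).Nonempty := hfH ▸ hneH
    have hminH : (filt H px).min' hneH = (filt H X₀).min' hneH0 := by
      rw [min'_congr hfH hneH]
    by_cases hG : (filt G X₀).Nonempty
    · have hG' : (filt G px).Nonempty := hfG ▸ hG
      have hminG : (filt G px).min' hG' = (filt G X₀).min' hG := by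
        rw [min'_congr hfG hG']
      have hyc : py < (filt G X₀).min' hG := by
        by_contra hcon
        push_neg at hcon
        exact hNot (mem_UpS_iff.mpr ⟨hG', by omega⟩)
      refine ⟨⟨X₀, (filt H X₀).min' hneH0 + (py - (filt H X₀).min' hneH0), true, false⟩,
        ?_, ?_⟩
      · apply List.mem_append_right
        unfold tailPieces
        simp only [← hX₀]
        rw [dif_pos hneH0, dif_pos hG]
        exact List.mem_map.mpr ⟨py - (filt H X₀).min' hneH0,
          List.mem_range.mpr (by omega), rfl⟩
      · exact ⟨by simp only [if_true]; omega,
          by simp only [Bool.false_eq_true, if_false]; omega⟩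
    · refine ⟨⟨X₀, (filt H X₀).min' hneH0, true, true⟩, ?_, ?_⟩
      · apply List.mem_append_right
        unfold tailPieces
        simp only [← hX₀]
        rw [dif_pos hneH0, dif_neg hG]
        exact List.mem_singleton.mpr rfl
      · exact ⟨by simp only [if_true]; omega, by simp only [if_true]; omega⟩

end SD
namespace SD

/-! ### 3D pieces and regions -/

structure Pc3 where
  df : Fin 3 → ℕ
  Z : Finset (Fin 3)

def Pc3.set (P : Pc3) : Set (Fin 3 →₀ ℕ) :=
  {e | ∀ c, if c ∈ P.Z then P.df c ≤ e c else e c = P.df c}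

def o1 : Fin 3 → Fin 3 := ![1, 0, 0]
def o2 : Fin 3 → Fin 3 := ![2, 2, 1]

lemma o_cases : ∀ c d : Fin 3, d = c ∨ d = o1 c ∨ d = o2 c := by decide
lemma o1_ne : ∀ c, o1 c ≠ c := by decide
lemma o2_ne : ∀ c, o2 c ≠ c := by decide
lemma o1_ne_o2 : ∀ c, o1 c ≠ o2 c := by decide
lemma fin3_cases : ∀ c : Fin 3, c = 0 ∨ c = 1 ∨ c = 2 := by decide

def proj (c : Fin 3) (e : Fin 3 →₀ ℕ) : ℕ × ℕ := (e (o1 c), e (o2 c))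

section Regions

variable {m : ℕ} (uu : Fin m → Fin 3 → ℕ)

/-- the exponent set of the ideal. -/
def E3 : Set (Fin 3 →₀ ℕ) := {e | ∃ i, ∀ c, uu i c ≤ e c}

def Gc (c : Fin 3) : Finset (ℕ × ℕ) :=
  Finset.image (fun i => (uu i (o1 c), uu i (o2 c))) Finset.univ

/-- `e ∈ Ec c` iff some generator divides `e·x_c^∞`. -/
def Ec (c : Fin 3) : Set (Fin 3 →₀ ℕ) := {e | proj c e ∈ UpS (Gc uu c)}

lemma UpS_image {f : Fin m → ℕ × ℕ} {p : ℕ × ℕ} :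
    p ∈ UpS (Finset.image f Finset.univ) ↔ ∃ i, (f i).1 ≤ p.1 ∧ (f i).2 ≤ p.2 := by
  constructor
  · rintro ⟨g, hg, h1, h2⟩
    obtain ⟨i, _, rfl⟩ := Finset.mem_image.mp hg
    exact ⟨i, h1, h2⟩
  · rintro ⟨i, h1, h2⟩
    exact ⟨f i, Finset.mem_image_of_mem _ (Finset.mem_univ i), h1, h2⟩

lemma mem_Ec_iff {c : Fin 3} {e : Fin 3 →₀ ℕ} :
    e ∈ Ec uu c ↔ ∃ i, uu i (o1 c) ≤ e (o1 c) ∧ uu i (o2 c) ≤ e (o2 c) := UpS_image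

lemma E3_subset_Ec (c : Fin 3) : E3 uu ⊆ Ec uu c := by
  rintro e ⟨i, hi⟩
  exact mem_Ec_iff uu |>.mpr ⟨i, hi (o1 c), hi (o2 c)⟩

def Reg (c : Fin 3) : Set (Fin 3 →₀ ℕ) := {e | e ∉ Ec uu c ∧ ∀ c' < c, e ∈ Ec uu c'}

lemma Reg_disjoint {c c' : Fin 3} (h : c ≠ c') : Disjoint (Reg uu c) (Reg uu c') := by
  rw [Set.disjoint_left]
  rintro e ⟨h1, h2⟩ ⟨h1', h2'⟩
  rcases lt_or_gt_of_ne h with hlt | hlt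
  · exact h1 (h2' c hlt)
  · exact h1' (h2 c' hlt)

lemma Reg_subset_compl (c : Fin 3) : Reg uu c ⊆ (E3 uu)ᶜ :=
  fun _ he hmem => he.1 (E3_subset_Ec uu c hmem)

lemma compl_subset_regions
    (hfree : ∀ e ∉ E3 uu, ∃ c, ∀ t : ℕ, (e + Finsupp.single c t) ∉ E3 uu) :
    (E3 uu)ᶜ ⊆ Reg uu 0 ∪ Reg uu 1 ∪ Reg uu 2 := by
  intro e he
  have hkey : ∃ c, e ∉ Ec uu c := by
    obtain ⟨c, hc⟩ := hfree e he
    refine ⟨c, fun hmem => ?_⟩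
    obtain ⟨i, h1, h2⟩ := mem_Ec_iff uu |>.mp hmem
    apply hc (uu i c)
    refine ⟨i, fun d => ?_⟩
    rcases o_cases c d with rfl | rfl | rfl
    · simp [Finsupp.add_apply, Finsupp.single_apply]
    · simpa [Finsupp.add_apply, Finsupp.single_apply, (o1_ne c).symm] using h1
    · simpa [Finsupp.add_apply, Finsupp.single_apply, (o2_ne c).symm] using h2
  by_cases h0 : e ∈ Ec uu 0
  · by_cases h1 : e ∈ Ec uu 1
    · have h2 : e ∉ Ec uu 2 := by
        obtain ⟨c, hc⟩ := hkey
        fin_cases c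
        · exact absurd h0 hc
        · exact absurd h1 hc
        · exact hc
      refine Or.inr ⟨h2, ?_⟩
      intro c' hc'
      have : c' = 0 ∨ c' = 1 := by revert hc'; revert c'; decide
      rcases this with rfl | rfl
      · exact h0
      · exact h1
    · refine Or.inl (Or.inr ⟨h1, ?_⟩)
      intro c' hc'
      have : c' = 0 := by revert hc'; revert c'; decide
      subst this
      exact h0
  · refine Or.inl (Or.inl ⟨h0, ?_⟩)
    intro c' hc'
    exact absurd hc' (by revert c'; decide)

/-! ### strata -/

/-- generators for the condition "the thresholds in the lower regions are `≤ v`". -/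
def Hc (c : Fin 3) (v : ℕ) : Finset (ℕ × ℕ) :=
  if c = 0 then {((0 : ℕ), (0 : ℕ))}
  else if c = 1 then
    (Finset.univ.filter (fun i => uu i 1 ≤ v)).image (fun i => ((0 : ℕ), uu i 2))
  else
    ((Finset.univ ×ˢ Finset.univ).filter
      (fun ij : Fin m × Fin m => uu ij.1 2 ≤ v ∧ uu ij.2 2 ≤ v)).image
      (fun ij => (uu ij.2 0, uu ij.1 1))

def QLE (c : Fin 3) (v : ℕ) : Set (ℕ × ℕ) := UpS (Hc uu c v)

lemma mem_QLE0 {v : ℕ} {p : ℕ × ℕ} : p ∈ QLE uu 0 v := by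
  refine ⟨(0, 0), ?_, Nat.zero_le _, Nat.zero_le _⟩
  rw [Hc, if_pos rfl]
  exact Finset.mem_singleton_self _

lemma mem_QLE1 {v : ℕ} {p : ℕ × ℕ} :
    p ∈ QLE uu 1 v ↔ ∃ i, uu i 1 ≤ v ∧ uu i 2 ≤ p.2 := by
  rw [QLE, Hc, if_neg (by decide), if_pos rfl]
  constructor
  · rintro ⟨g, hg, h1, h2⟩
    obtain ⟨i, hi, rfl⟩ := Finset.mem_image.mp hg
    exact ⟨i, (Finset.mem_filter.mp hi).2, h2⟩
  · rintro ⟨i, hi1, hi2⟩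
    exact ⟨((0:ℕ), uu i 2), Finset.mem_image_of_mem _
      (Finset.mem_filter.mpr ⟨Finset.mem_univ i, hi1⟩), Nat.zero_le _, hi2⟩

lemma mem_QLE2 {v : ℕ} {p : ℕ × ℕ} :
    p ∈ QLE uu 2 v ↔ ∃ i j, uu i 2 ≤ v ∧ uu j 2 ≤ v ∧ uu i 1 ≤ p.2 ∧ uu j 0 ≤ p.1 := by
  rw [QLE, Hc, if_neg (by decide), if_neg (by decide)]
  constructor
  · rintro ⟨g, hg, h1, h2⟩
    obtain ⟨ij, hij, rfl⟩ := Finset.mem_image.mp hg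
    obtain ⟨-, hij2⟩ := Finset.mem_filter.mp hij
    exact ⟨ij.1, ij.2, hij2.1, hij2.2, h2, h1⟩
  · rintro ⟨i, j, h1, h2, h3, h4⟩
    exact ⟨(uu j 0, uu i 1), Finset.mem_image.mpr ⟨(i, j), Finset.mem_filter.mpr
      ⟨Finset.mem_product.mpr ⟨Finset.mem_univ i, Finset.mem_univ j⟩, ⟨h1, h2⟩⟩, rfl⟩,
      h4, h3⟩

lemma QLE_mono {c : Fin 3} {v v' : ℕ} (h : v ≤ v') : QLE uu c v ⊆ QLE uu c v' := by
  intro p hp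
  rcases fin3_cases c with rfl | rfl | rfl
  · exact mem_QLE0 uu
  · obtain ⟨i, h1, h2⟩ := (mem_QLE1 uu).mp hp
    exact (mem_QLE1 uu).mpr ⟨i, le_trans h1 h, h2⟩
  · obtain ⟨i, j, h1, h2, h3, h4⟩ := (mem_QLE2 uu).mp hp
    exact (mem_QLE2 uu).mpr ⟨i, j, le_trans h1 h, le_trans h2 h, h3, h4⟩

lemma QLE_pin {c : Fin 3} {v : ℕ} {p : ℕ × ℕ} (hv : 0 < v) (h1 : p ∈ QLE uu c v)
    (h2 : p ∉ QLE uu c (v - 1)) : ∃ i, uu i c = v := by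
  fin_cases c
  · exact absurd (mem_QLE0 uu) h2
  · obtain ⟨i, hi1, hi2⟩ := (mem_QLE1 uu).mp h1
    refine ⟨i, le_antisymm hi1 ?_⟩
    by_contra hlt
    push_neg at hlt
    exact h2 ((mem_QLE1 uu).mpr ⟨i, Nat.le_pred_of_lt hlt, hi2⟩)
  · obtain ⟨i, j, hi1, hj1, hi2, hj2⟩ := (mem_QLE2 uu).mp h1
    rcases Nat.lt_or_ge (uu i 2) v with hlt | hge
    · refine ⟨j, le_antisymm hj1 ?_⟩
      by_contra hlt2
      push_neg at hlt2
      exact h2 ((mem_QLE2 uu).mpr ⟨i, j, Nat.le_pred_of_lt hlt,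
        Nat.le_pred_of_lt hlt2, hi2, hj2⟩)
    · exact ⟨i, le_antisymm hi1 hge⟩

lemma QLE_imp_Ec {c : Fin 3} {v : ℕ} {e : Fin 3 →₀ ℕ} (hv : v ≤ e c)
    (h : proj c e ∈ QLE uu c v) : ∀ c' < c, e ∈ Ec uu c' := by
  intro c' hc'
  rcases fin3_cases c with rfl | rfl | rfl
  · exact absurd hc' (by revert c'; decide)
  · have : c' = 0 := by revert hc'; revert c'; decide
    subst this
    obtain ⟨i, h1, h2⟩ := (mem_QLE1 uu).mp h
    exact (mem_Ec_iff uu).mpr ⟨i, le_trans h1 hv, h2⟩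
  · have : c' = 0 ∨ c' = 1 := by revert hc'; revert c'; decide
    obtain ⟨i, j, h1, h2, h3, h4⟩ := (mem_QLE2 uu).mp h
    rcases this with rfl | rfl
    · exact (mem_Ec_iff uu).mpr ⟨i, h3, le_trans h1 hv⟩
    · exact (mem_Ec_iff uu).mpr ⟨j, h4, le_trans h2 hv⟩

lemma Ec_imp_QLE {c : Fin 3} {e : Fin 3 →₀ ℕ} (h : ∀ c' < c, e ∈ Ec uu c') :
    proj c e ∈ QLE uu c (e c) := by
  rcases fin3_cases c with rfl | rfl | rfl
  · exact mem_QLE0 uu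
  · obtain ⟨i, h1, h2⟩ := (mem_Ec_iff uu).mp (h 0 (by decide))
    exact (mem_QLE1 uu).mpr ⟨i, h1, h2⟩
  · obtain ⟨i, h1, h2⟩ := (mem_Ec_iff uu).mp (h 0 (by decide))
    obtain ⟨j, h3, h4⟩ := (mem_Ec_iff uu).mp (h 1 (by decide))
    exact (mem_QLE2 uu).mpr ⟨i, j, h2, h4, h1, h3⟩

/-- generator set for the complement part of a stratum. -/
def GG (c : Fin 3) (v : ℕ) : Finset (ℕ × ℕ) :=
  if v = 0 then Gc uu c else Gc uu c ∪ Hc uu c (v - 1)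

lemma mem_MB_GG_iff {c : Fin 3} {v : ℕ} {p : ℕ × ℕ} :
    p ∈ MB (GG uu c v) (Hc uu c v) ↔
      p ∈ QLE uu c v ∧ p ∉ UpS (Gc uu c) ∧ (v = 0 ∨ p ∉ QLE uu c (v - 1)) := by
  rw [MB, GG]
  rcases eq_or_ne v 0 with rfl | hv
  · rw [if_pos rfl]
    constructor
    · rintro ⟨h1, h2⟩; exact ⟨h1, h2, Or.inl rfl⟩
    · rintro ⟨h1, h2, -⟩; exact ⟨h1, h2⟩
  · rw [if_neg hv]
    constructor
    · rintro ⟨h1, h2⟩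
      rw [UpS_union] at h2
      exact ⟨h1, fun hG => h2 (Or.inl hG), Or.inr (fun hH => h2 (Or.inr hH))⟩
    · rintro ⟨h1, h2, h3⟩
      refine ⟨h1, ?_⟩
      rw [UpS_union]
      rintro (hG | hH)
      · exact h2 hG
      · rcases h3 with h3 | h3
        · exact hv h3
        · exact h3 hH

end Regions
end SD
namespace SD

section Lift

/-- Lift a 2D piece to a 3D piece with free direction `c` and base value `v` at `c`. -/
def liftP (c : Fin 3) (v : ℕ) (P : Pc2) : Pc3 where
  df := fun d => if d = c then v else if d = o1 c then P.a else P.b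
  Z := insert c ((if P.fa then {o1 c} else ∅) ∪ (if P.fb then {o2 c} else ∅))

variable {c : Fin 3} {v : ℕ} {P : Pc2}

lemma liftP_df_self : (liftP c v P).df c = v := by simp [liftP]

lemma liftP_df_o1 : (liftP c v P).df (o1 c) = P.a := by
  simp [liftP, o1_ne c]

lemma liftP_df_o2 : (liftP c v P).df (o2 c) = P.b := by
  simp [liftP, o2_ne c, (o1_ne_o2 c).symm]

lemma liftP_c_mem_Z : c ∈ (liftP c v P).Z := Finset.mem_insert_self c _

lemma liftP_o1_mem_Z : (o1 c ∈ (liftP c v P).Z) ↔ P.fa = true := by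
  cases hfa : P.fa <;> cases hfb : P.fb <;>
    simp [liftP, Finset.mem_insert, Finset.mem_union, o1_ne c, o1_ne_o2 c, hfa, hfb]

lemma liftP_o2_mem_Z : (o2 c ∈ (liftP c v P).Z) ↔ P.fb = true := by
  cases hfa : P.fa <;> cases hfb : P.fb <;>
    simp [liftP, Finset.mem_insert, Finset.mem_union, o2_ne c, (o1_ne_o2 c).symm, hfa, hfb]

lemma mem_liftP {e : Fin 3 →₀ ℕ} :
    e ∈ (liftP c v P).set ↔ proj c e ∈ P.set ∧ v ≤ e c := by
  constructor
  · intro h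
    have h1 := h c
    have h2 := h (o1 c)
    have h3 := h (o2 c)
    rw [if_pos liftP_c_mem_Z, liftP_df_self] at h1
    refine ⟨⟨?_, ?_⟩, h1⟩
    · cases hfa : P.fa
      · rw [if_neg (fun hm => by rw [liftP_o1_mem_Z, hfa] at hm; exact Bool.false_ne_true hm),
          liftP_df_o1] at h2
        simpa [Pc2.set, proj, hfa] using h2
      · rw [if_pos (liftP_o1_mem_Z.mpr hfa), liftP_df_o1] at h2
        simpa [Pc2.set, proj, hfa] using h2
    · cases hfb : P.fb
      · rw [if_neg (fun hm => by rw [liftP_o2_mem_Z, hfb] at hm; exact Bool.false_ne_true hm),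
          liftP_df_o2] at h3
        simpa [Pc2.set, proj, hfb] using h3
      · rw [if_pos (liftP_o2_mem_Z.mpr hfb), liftP_df_o2] at h3
        simpa [Pc2.set, proj, hfb] using h3
  · rintro ⟨⟨hp1, hp2⟩, hv⟩ d
    rcases o_cases c d with rfl | rfl | rfl
    · rw [if_pos liftP_c_mem_Z, liftP_df_self]
      exact hv
    · cases hfa : P.fa
      · rw [if_neg (fun hm => by rw [liftP_o1_mem_Z, hfa] at hm; exact Bool.false_ne_true hm),
          liftP_df_o1]
        rw [hfa] at hp1
        simpa [proj] using hp1
      · rw [if_pos (liftP_o1_mem_Z.mpr hfa), liftP_df_o1]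
        rw [hfa] at hp1
        simpa [proj] using hp1
    · cases hfb : P.fb
      · rw [if_neg (fun hm => by rw [liftP_o2_mem_Z, hfb] at hm; exact Bool.false_ne_true hm),
          liftP_df_o2]
        rw [hfb] at hp2
        simpa [proj] using hp2
      · rw [if_pos (liftP_o2_mem_Z.mpr hfb), liftP_df_o2]
        rw [hfb] at hp2
        simpa [proj] using hp2

lemma liftP_disj_same {Q : Pc2} (h : Disjoint P.set Q.set) :
    Disjoint (liftP c v P).set (liftP c v Q).set := by
  rw [Set.disjoint_left] at h ⊢
  intro e he he'
  exact h (mem_liftP.mp he).1 (mem_liftP.mp he').1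

end Lift

section RegionList

variable {m : ℕ} (uu : Fin m → Fin 3 → ℕ)

noncomputable def Vals (c : Fin 3) : Finset ℕ :=
  insert 0 (Finset.image (fun i => uu i c) Finset.univ)

noncomputable def regionList (c : Fin 3) : List Pc3 :=
  (Vals uu c).toList.flatMap
    (fun v => (lemBList (GG uu c v) (Hc uu c v)).map (liftP c v))

noncomputable def grandList : List Pc3 :=
  regionList uu 0 ++ (regionList uu 1 ++ regionList uu 2)

lemma strat_block_disj {c : Fin 3} {v v' : ℕ} (hne : v ≠ v') {P2 Q2 : Pc2}
    (hP : P2.set ⊆ MB (GG uu c v) (Hc uu c v))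
    (hQ : Q2.set ⊆ MB (GG uu c v') (Hc uu c v')) :
    Disjoint (liftP c v P2).set (liftP c v' Q2).set := by
  rw [Set.disjoint_left]
  intro e he he'
  obtain ⟨hpe, -⟩ := mem_liftP.mp he
  obtain ⟨hpe', -⟩ := mem_liftP.mp he'
  obtain ⟨h1, -, h3⟩ := (mem_MB_GG_iff uu).mp (hP hpe)
  obtain ⟨h1', -, h3'⟩ := (mem_MB_GG_iff uu).mp (hQ hpe')
  rcases Nat.lt_or_ge v v' with hlt | hge
  · rcases h3' with h0 | h3'
    · omega
    · exact h3' (QLE_mono uu (by omega) h1)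
  · have hlt : v' < v := by omega
    rcases h3 with h0 | h3
    · omega
    · exact h3 (QLE_mono uu (by omega) h1')

lemma regionList_pairwise (c : Fin 3) :
    (regionList uu c).Pairwise (fun P Q => Disjoint P.set Q.set) := by
  unfold regionList
  rw [List.flatMap_def, List.pairwise_flatten]
  constructor
  · intro l hl
    obtain ⟨v, _, rfl⟩ := List.mem_map.mp hl
    rw [List.pairwise_map]
    exact (lemBList_pairwise _ _).imp (fun h => liftP_disj_same h)
  · rw [List.pairwise_map]
    refine List.Pairwise.imp ?_ (Finset.nodup_toList (Vals uu c))
    intro v v' hvv P hP Q hQ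
    obtain ⟨P2, hP2, rfl⟩ := List.mem_map.mp hP
    obtain ⟨Q2, hQ2, rfl⟩ := List.mem_map.mp hQ
    exact strat_block_disj uu hvv (lemBList_subset _ _ hP2) (lemBList_subset _ _ hQ2)

lemma regionList_subset {c : Fin 3} {P : Pc3} (hP : P ∈ regionList uu c) :
    P.set ⊆ Reg uu c := by
  obtain ⟨v, hv, hP'⟩ := List.mem_flatMap.mp hP
  obtain ⟨P2, hP2, rfl⟩ := List.mem_map.mp hP'
  intro e he
  obtain ⟨hpe, hve⟩ := mem_liftP.mp he
  obtain ⟨h1, h2, -⟩ := (mem_MB_GG_iff uu).mp (lemBList_subset _ _ hP2 hpe)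
  exact ⟨h2, QLE_imp_Ec uu hve h1⟩

lemma regionList_Z {c : Fin 3} {P : Pc3} (hP : P ∈ regionList uu c) : P.Z.Nonempty := by
  obtain ⟨v, hv, hP'⟩ := List.mem_flatMap.mp hP
  obtain ⟨P2, hP2, rfl⟩ := List.mem_map.mp hP'
  exact ⟨c, liftP_c_mem_Z⟩

lemma regionList_cover {c : Fin 3} {e : Fin 3 →₀ ℕ} (he : e ∈ Reg uu c) :
    ∃ P ∈ regionList uu c, e ∈ P.set := by
  have hQ : ∃ v, proj c e ∈ QLE uu c v := ⟨e c, Ec_imp_QLE uu he.2⟩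
  classical
  set v0 := Nat.find hQ with hv0
  have hfind : proj c e ∈ QLE uu c v0 := Nat.find_spec hQ
  have hle : v0 ≤ e c := Nat.find_min' hQ (Ec_imp_QLE uu he.2)
  have hmin : ∀ w, w < v0 → proj c e ∉ QLE uu c w := fun w hw => Nat.find_min hQ hw
  have hvV : v0 ∈ Vals uu c := by
    rcases Nat.eq_zero_or_pos v0 with h0 | hpos
    · rw [h0]; exact Finset.mem_insert_self _ _
    · obtain ⟨i, hi⟩ := QLE_pin uu hpos hfind (hmin (v0 - 1) (by omega))
      exact Finset.mem_insert_of_mem (Finset.mem_image.mpr ⟨i, Finset.mem_univ i, hi⟩)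
  have hstrat : proj c e ∈ MB (GG uu c v0) (Hc uu c v0) := by
    refine (mem_MB_GG_iff uu).mpr ⟨hfind, he.1, ?_⟩
    rcases Nat.eq_zero_or_pos v0 with h0 | hpos
    · exact Or.inl h0
    · exact Or.inr (hmin (v0 - 1) (by omega))
  obtain ⟨P2, hP2mem, hproj⟩ := lemBList_cover _ _ hstrat
  refine ⟨liftP c v0 P2, ?_, mem_liftP.mpr ⟨hproj, hle⟩⟩
  exact List.mem_flatMap.mpr ⟨v0, Finset.mem_toList.mpr hvV,
    List.mem_map.mpr ⟨P2, hP2mem, rfl⟩⟩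

/-- master combinatorial theorem: the grand list is a Stanley-type partition of the
complement of `E3 uu`. -/
theorem grand_decomp
    (hfree : ∀ e ∉ E3 uu, ∃ c, ∀ t : ℕ, (e + Finsupp.single c t) ∉ E3 uu) :
    (grandList uu).Pairwise (fun P Q => Disjoint P.set Q.set) ∧
    (∀ P ∈ grandList uu, P.Z.Nonempty) ∧
    (∀ P ∈ grandList uu, P.set ⊆ (E3 uu)ᶜ) ∧
    (∀ e ∈ (E3 uu)ᶜ, ∃ P ∈ grandList uu, e ∈ P.set) := by
  have hsub : ∀ c : Fin 3, ∀ P ∈ regionList uu c, P.set ⊆ Reg uu c :=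
    fun c P hP => regionList_subset uu hP
  have hcross : ∀ (c c' : Fin 3), c ≠ c' → ∀ P ∈ regionList uu c, ∀ Q ∈ regionList uu c',
      Disjoint P.set Q.set := by
    intro c c' hne P hP Q hQ
    exact Set.disjoint_of_subset (hsub c P hP) (hsub c' Q hQ) (Reg_disjoint uu hne)
  refine ⟨?_, ?_, ?_, ?_⟩
  · unfold grandList
    rw [List.pairwise_append]
    refine ⟨regionList_pairwise uu 0, ?_, ?_⟩
    · rw [List.pairwise_append]
      refine ⟨regionList_pairwise uu 1, regionList_pairwise uu 2, ?_⟩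
      exact fun P hP Q hQ => hcross 1 2 (by decide) P hP Q hQ
    · intro P hP Q hQ
      rcases List.mem_append.mp hQ with hQ | hQ
      · exact hcross 0 1 (by decide) P hP Q hQ
      · exact hcross 0 2 (by decide) P hP Q hQ
  · intro P hP
    rcases List.mem_append.mp hP with h | h
    · exact regionList_Z uu h
    rcases List.mem_append.mp h with h | h
    · exact regionList_Z uu h
    · exact regionList_Z uu h
  · intro P hP
    rcases List.mem_append.mp hP with h | h
    · exact (hsub 0 P h).trans (Reg_subset_compl uu 0)
    rcases List.mem_append.mp h with h | h
    · exact (hsub 1 P h).trans (Reg_subset_compl uu 1)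
    · exact (hsub 2 P h).trans (Reg_subset_compl uu 2)
  · intro e he
    rcases compl_subset_regions uu hfree he with (h | h) | h
    · obtain ⟨P, hP, hPe⟩ := regionList_cover uu h
      exact ⟨P, List.mem_append_left _ hP, hPe⟩
    · obtain ⟨P, hP, hPe⟩ := regionList_cover uu h
      exact ⟨P, List.mem_append_right _ (List.mem_append_left _ hP), hPe⟩
    · obtain ⟨P, hP, hPe⟩ := regionList_cover uu h
      exact ⟨P, List.mem_append_right _ (List.mem_append_right _ hP), hPe⟩

end RegionList
end SD
namespace SD
open MvPolynomial

variable {K : Type*} [Field K]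

lemma pieceSet_eq_Pc3set (P : Pc3) :
    pieceSet (Finsupp.equivFunOnFinite.symm P.df) P.Z = P.set := by
  ext e
  have happ : ∀ c, (Finsupp.equivFunOnFinite.symm P.df) c = P.df c := by
    intro c; simp
  constructor
  · rintro ⟨h1, h2⟩ c
    by_cases hc : c ∈ P.Z
    · rw [if_pos hc]
      have := Finsupp.le_def.mp h1 c
      rwa [happ] at this
    · rw [if_neg hc]
      rw [h2 c hc, happ]
  · intro h
    constructor
    · rw [Finsupp.le_def]
      intro c
      rw [happ]
      have := h c
      by_cases hc : c ∈ P.Z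
      · rw [if_pos hc] at this; exact this
      · rw [if_neg hc] at this; omega
    · intro c hc
      have := h c
      rw [if_neg hc] at this
      rw [happ]
      exact this

/-- The decomposition theorem: if `I = (I : m)` (and `I` is a proper nonzero monomial
ideal given by generators `u`), then `sdepth(S/I) = 1` provided it is `≤ 1`;
here we prove `1 ≤ sdepthQuot I`. -/
theorem one_le_sdepthQuot_of_colon {I : Ideal (MvPolynomial (Fin 3) K)} {m : ℕ}
    {u : Fin m → (Fin 3 →₀ ℕ)} (hgen : minGens I = Set.range u)
    (hone : (1 : MvPolynomial (Fin 3) K) ∉ I)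
    (hcol : I = Submodule.colon I (irrelevantIdeal K (Fin 3))) :
    1 ≤ sdepthQuot I := by
  classical
  set uu : Fin m → Fin 3 → ℕ := fun i c => u i c with huu
  -- characterization of the exponent set
  have hE : ∀ e : Fin 3 →₀ ℕ, e ∈ E3 uu ↔ monomial e (1 : K) ∈ I := by
    intro e
    constructor
    · rintro ⟨i, hi⟩
      refine monomial_mem_of_le (Finsupp.le_def.mpr hi) ?_
      have : u i ∈ minGens I := hgen ▸ ⟨i, rfl⟩
      exact this.1
    · intro hmem
      obtain ⟨g, hg, hgle⟩ := exists_minGen_le hmem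
      rw [hgen] at hg
      obtain ⟨i, rfl⟩ := hg
      exact ⟨i, Finsupp.le_def.mp hgle⟩
  have hfree : ∀ e ∉ E3 uu, ∃ c, ∀ t : ℕ, (e + Finsupp.single c t) ∉ E3 uu := by
    intro e he
    obtain ⟨c, hc⟩ := free_ray (by norm_num) (colon_step hcol)
      (fun hmem => he ((hE e).mpr hmem))
    refine ⟨c, fun t hmem => hc t ((hE _).mp hmem)⟩
  obtain ⟨hpw, hZ, hsubA, hcover⟩ := grand_decomp uu hfree
  set L := grandList uu with hL
  set r := L.length with hr
  set dd : Fin r → (Fin 3 →₀ ℕ) := fun i => Finsupp.equivFunOnFinite.symm (L.get i).df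
    with hdd
  set ZZ : Fin r → Finset (Fin 3) := fun i => (L.get i).Z with hZZ
  have hSS : ∀ i : Fin r, stanleySpace K (dd i) (ZZ i) = suppSet K (L.get i).set := by
    intro i
    rw [hdd, hZZ, stanleySpace_eq_suppSet]
    congr 1
    exact pieceSet_eq_Pc3set _
  have hA : {e : Fin 3 →₀ ℕ | monomial e (1:K) ∉ I} = (E3 uu)ᶜ := by
    ext e
    simp only [Set.mem_setOf_eq, Set.mem_compl_iff]
    exact not_congr (hE e).symm
  have hdisj : ∀ i j : Fin r, i ≠ j → Disjoint (L.get i).set (L.get j).set := by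
    intro i j hij
    have := List.pairwise_iff_get.mp hpw
    rcases Nat.lt_or_ge i.val j.val with h | h
    · exact this i j h
    · have : j.val < i.val := by
        rcases Nat.lt_or_ge j.val i.val with h' | h'
        · exact h'
        · exact absurd (Fin.ext (by omega)) hij
      exact (List.pairwise_iff_get.mp hpw j i this).symm
  have hdecomp : IsStanleyDecomp (monomialCompl I) r dd ZZ := by
    constructor
    · rw [iSupIndep_def]
      intro i
      rw [disjoint_iff]
      rw [eq_bot_iff]
      intro x hx
      rw [Submodule.mem_inf] at hx
      obtain ⟨hx1, hx2⟩ := hx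
      rw [hSS i] at hx1
      have hx2' : x ∈ suppSet K (⋃ j, ⋃ (_ : j ≠ i), (L.get j).set) := by
        refine (iSup_le fun j => iSup_le fun hj => ?_ : (⨆ j, ⨆ (_ : j ≠ i),
          stanleySpace K (dd j) (ZZ j)) ≤ _) hx2
        rw [hSS j]
        exact suppSet_mono (fun e he => Set.mem_iUnion.mpr ⟨j, Set.mem_iUnion.mpr ⟨hj, he⟩⟩)
      rw [Submodule.mem_bot]
      rw [← MvPolynomial.support_eq_empty]
      rw [Finset.eq_empty_iff_forall_notMem]
      intro e he
      have he1 := hx1 e he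
      have he2 := hx2' e he
      simp only [Set.mem_iUnion] at he2
      obtain ⟨j, hj, hej⟩ := he2
      exact Set.disjoint_left.mp (hdisj i j (Ne.symm hj)) he1 hej
    · apply le_antisymm
      · apply iSup_le
        intro i
        rw [hSS i, monomialCompl_eq_suppSet, hA]
        exact suppSet_mono (hsubA _ (List.get_mem L ⟨i.val, i.isLt⟩))
      · rw [monomialCompl_eq_suppSet]
        apply suppSet_le_span
        intro e he
        rw [hA] at he
        obtain ⟨P, hP, hPe⟩ := hcover e he
        obtain ⟨i, rfl⟩ := List.mem_iff_get.mp hP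
        refine le_iSup (fun i => stanleySpace K (dd i) (ZZ i)) i ?_
        show _ ∈ stanleySpace K (dd i) (ZZ i)
        rw [hSS i, monomial_mem_suppSet]
        exact hPe
  apply le_sdepth (V := monomialCompl I) ?_ hdecomp
  · intro i
    rw [Nat.succ_le_iff, Finset.card_pos]
    exact hZ _ (List.get_mem L ⟨i.val, i.isLt⟩)
  · intro hbot
    have hmon1 : monomial (0 : Fin 3 →₀ ℕ) (1:K) = 1 := by simp
    have h0 : monomial (0 : Fin 3 →₀ ℕ) (1:K) ∈ monomialCompl I := by
      rw [monomial_mem_monomialCompl, hmon1]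
      exact hone
    rw [hbot, Submodule.mem_bot, hmon1] at h0
    exact one_ne_zero h0

end SD
open MvPolynomial SD in
/-- Let `I ⊆ K[x_1,x_2,x_3]` be a monomial ideal with `g(I) = m > 3` and
`c(I) = 3`, with minimal generators `u_1,…,u_m`. If `sdepth(S/I_σ) = 1` for every
3-element subset `σ ⊆ [m]`, then `sdepth(S/I) = 1`; otherwise, if `I ≠ (I : (x_1,x_2,x_3))`,
then `sdepth(S/I) = 0`. In particular, if `I ≠ I^sat` then there are three distinct minimal
generators `u_i, u_j, u_k` with `sdepth(S/(u_i,u_j,u_k)) = 0`. -/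
theorem stmt15 {K : Type*} [Field K] (I : Ideal (MvPolynomial (Fin 3) K))
    (hI : IsMonomialIdeal I) (m : ℕ) (hm : 3 < m) (hc : numSupp I = 3)
    (u : Fin m → (Fin 3 →₀ ℕ)) (hu : Function.Injective u)
    (hgen : minGens I = Set.range u) :
    ((∀ σ : Finset (Fin m), σ.card = 3 →
        sdepthQuot (Ideal.span ((fun i => monomial (u i) (1 : K)) '' ↑σ)) = 1) →
      sdepthQuot I = 1) ∧
    ((¬ ∀ σ : Finset (Fin m), σ.card = 3 →
        sdepthQuot (Ideal.span ((fun i => monomial (u i) (1 : K)) '' ↑σ)) = 1) →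
      I ≠ Submodule.colon I (irrelevantIdeal K (Fin 3)) → sdepthQuot I = 0) ∧
    (I ≠ satIdeal I → ∃ i j k : Fin m, i ≠ j ∧ i ≠ k ∧ j ≠ k ∧
      sdepthQuot (Ideal.span
        {monomial (u i) (1 : K), monomial (u j) (1 : K), monomial (u k) (1 : K)}) = 0) := by
  set i0 : Fin m := ⟨0, by omega⟩ with hi0
  set i1 : Fin m := ⟨1, by omega⟩ with hi1
  have h01 : i0 ≠ i1 := by
    rw [hi0, hi1]
    intro h
    have := congrArg Fin.val h
    simp at this
  have hmem0 : u i0 ∈ minGens I := hgen ▸ ⟨i0, rfl⟩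
  have hmem1 : u i1 ∈ minGens I := hgen ▸ ⟨i1, rfl⟩
  have hune : u i0 ≠ u i1 := fun h => h01 (hu h)
  have hone : (1 : MvPolynomial (Fin 3) K) ∉ I := by
    intro h1I
    have hmon : monomial (0 : Fin 3 →₀ ℕ) (1 : K) ∈ I := by
      have : monomial (0 : Fin 3 →₀ ℕ) (1:K) = 1 := by simp
      rwa [this]
    have hz0 : u i0 = 0 := (hmem0.2 0 zero_le hmon).symm
    have hz1 : u i1 = 0 := (hmem1.2 0 zero_le hmon).symm
    exact hune (hz0.trans hz1.symm)
  refine ⟨?_, ?_, ?_⟩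
  · -- conjunct 1
    intro hyp1
    have hcol : I = Submodule.colon I (irrelevantIdeal K (Fin 3)) := by
      by_contra hne
      obtain ⟨w, hw, hstep⟩ := exists_corner_of_ne_colon hI hne
      obtain ⟨T, hTcard, hT0⟩ := exists_triple hm hgen hw hstep
      rw [hyp1 T hTcard] at hT0
      exact one_ne_zero hT0
    exact le_antisymm (sdepthQuot_le_one ⟨u i0, u i1, hmem0, hmem1, hune⟩)
      (one_le_sdepthQuot_of_colon hgen hone hcol)
  · -- conjunct 2
    intro _ hne
    obtain ⟨w, hw, hstep⟩ := exists_corner_of_ne_colon hI hne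
    exact sdepthQuot_eq_zero hw hstep
  · -- conjunct 3
    intro hne
    obtain ⟨w, hw, hstep⟩ := exists_corner_of_ne_sat hI hne
    obtain ⟨T, hTcard, hT0⟩ := exists_triple hm hgen hw hstep
    obtain ⟨a, b, c, hab, hac, hbc, rfl⟩ := Finset.card_eq_three.mp hTcard
    refine ⟨a, b, c, hab, hac, hbc, ?_⟩
    have himg : (fun i => monomial (u i) (1 : K)) '' ↑({a, b, c} : Finset (Fin m)) =
        {monomial (u a) (1 : K), monomial (u b) (1 : K), monomial (u c) (1 : K)} := by
      simp [Finset.coe_insert, Finset.coe_singleton, Set.image_insert_eq]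
    rwa [himg] at hT0
end
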